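/- arXiv:math/0610428 — 8 statements merged into one kernel-verified Lean document; each statement's English description precedes it below -/
import Mathlib

section
/- The number of permutations of {1,...,n} that avoid a nonconsecutive 21 pattern (i.e., every inversion occurs at adjacent positions) equals the Fibonacci number F(n+1). -/
/-- A permutation (as a function from positions to values) avoids a nonconsecutive 21
pattern if every inversion occurs at adjacent positions. -/
def AvoidsNonconsec21 {n : ℕ} (π : Equiv.Perm (Fin n)) : Prop :=
  ∀ i j : Fin n, i < j → π j < π i → (j : ℕ) = (i : ℕ) + 1

namespace AvoidAux

open Equiv Equiv.Perm

/-- Extend a permutation of `Fin (n+1)` to `Fin (n+2)` fixing `0`. -/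
def ext1 {n : ℕ} (σ : Perm (Fin (n + 1))) : Perm (Fin (n + 2)) :=
  decomposeFin.symm (0, σ)

/-- Extend a permutation of `Fin n` to `Fin (n+2)` swapping `0` and `1`. -/
def ext2 {n : ℕ} (σ : Perm (Fin n)) : Perm (Fin (n + 2)) :=
  swap 0 1 * decomposeFin.symm (0, decomposeFin.symm (0, σ))

lemma ext1_zero {n : ℕ} (σ : Perm (Fin (n + 1))) : ext1 σ 0 = 0 :=
  decomposeFin_symm_apply_zero 0 σ

lemma ext1_succ {n : ℕ} (σ : Perm (Fin (n + 1))) (j : Fin (n + 1)) :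
    ext1 σ j.succ = (σ j).succ := by
  rw [ext1, decomposeFin_symm_apply_succ, Equiv.swap_self]
  rfl

lemma ext2_zero {n : ℕ} (σ : Perm (Fin n)) : ext2 σ 0 = 1 := by
  rw [ext2]
  simp [Equiv.Perm.mul_apply, decomposeFin_symm_apply_zero]

lemma ext2_one {n : ℕ} (σ : Perm (Fin n)) : ext2 σ 1 = 0 := by
  rw [ext2]
  have h1 : (decomposeFin.symm (0, decomposeFin.symm (0, σ)) : Perm (Fin (n+2))) 1 = 1 := by
    rw [← Fin.succ_zero_eq_one, decomposeFin_symm_apply_succ, Equiv.swap_self,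
      decomposeFin_symm_apply_zero]
    rfl
  simp [Equiv.Perm.mul_apply, h1]

lemma ext2_succ_succ {n : ℕ} (σ : Perm (Fin n)) (j : Fin n) :
    ext2 σ j.succ.succ = (σ j).succ.succ := by
  rw [ext2]
  have h1 : (decomposeFin.symm (0, decomposeFin.symm (0, σ)) : Perm (Fin (n+2))) j.succ.succ
      = (σ j).succ.succ := by
    rw [decomposeFin_symm_apply_succ, Equiv.swap_self, Equiv.refl_apply,
      decomposeFin_symm_apply_succ, Equiv.swap_self]
    rfl
  rw [Equiv.Perm.mul_apply, h1]
  apply Equiv.swap_apply_of_ne_of_ne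
  · exact Fin.succ_ne_zero _
  · rw [← Fin.succ_zero_eq_one]
    intro h
    exact Fin.succ_ne_zero _ (Fin.succ_injective _ h)

lemma avoid_ext1 {n : ℕ} (σ : Perm (Fin (n + 1))) :
    AvoidsNonconsec21 (ext1 σ) ↔ AvoidsNonconsec21 σ := by
  constructor
  · intro h i j hij hlt
    have := h i.succ j.succ (by simpa [Fin.succ_lt_succ_iff] using hij)
      (by rw [ext1_succ, ext1_succ]; exact Fin.succ_lt_succ_iff.mpr hlt)
    simp only [Fin.val_succ] at this
    omega
  · intro h i j hij hlt
    cases i using Fin.cases with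
    | zero =>
        rw [ext1_zero] at hlt
        exact absurd hlt (Fin.not_lt_zero _)
    | succ i =>
        cases j using Fin.cases with
        | zero => exact absurd hij (Fin.not_lt_zero _)
        | succ j =>
            rw [ext1_succ, ext1_succ] at hlt
            have h1 : σ j < σ i := Fin.succ_lt_succ_iff.mp hlt
            have h2 : i < j := Fin.succ_lt_succ_iff.mp hij
            have := h i j h2 h1
            simp only [Fin.val_succ]
            omega

lemma avoid_ext2 {n : ℕ} (σ : Perm (Fin n)) :
    AvoidsNonconsec21 (ext2 σ) ↔ AvoidsNonconsec21 σ := by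
  constructor
  · intro h i j hij hlt
    have := h i.succ.succ j.succ.succ
      (by simpa [Fin.succ_lt_succ_iff] using hij)
      (by rw [ext2_succ_succ, ext2_succ_succ];
          exact Fin.succ_lt_succ_iff.mpr (Fin.succ_lt_succ_iff.mpr hlt))
    simp only [Fin.val_succ] at this
    omega
  · intro h i j hij hlt
    cases i using Fin.cases with
    | zero =>
        rw [ext2_zero] at hlt
        have hj0 : ext2 σ j = 0 := (Fin.lt_one_iff _).mp hlt
        have : j = 1 := (ext2 σ).injective (by rw [hj0, ext2_one])
        simp [this]
    | succ i =>
        cases i using Fin.cases with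
        | zero =>
            rw [Fin.succ_zero_eq_one, ext2_one] at hlt
            exact absurd hlt (Fin.not_lt_zero _)
        | succ i =>
            cases j using Fin.cases with
            | zero => exact absurd hij (Fin.not_lt_zero _)
            | succ j =>
                cases j using Fin.cases with
                | zero =>
                    exfalso
                    rw [Fin.succ_zero_eq_one] at hij
                    have := Fin.succ_lt_succ_iff.mp (by rwa [← Fin.succ_zero_eq_one] at hij)
                    exact absurd this (Fin.not_lt_zero _)
                | succ j =>
                    rw [ext2_succ_succ, ext2_succ_succ] at hlt
                    have h1 : σ j < σ i :=
                      Fin.succ_lt_succ_iff.mp (Fin.succ_lt_succ_iff.mp hlt)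
                    have h2 : i < j :=
                      Fin.succ_lt_succ_iff.mp (Fin.succ_lt_succ_iff.mp hij)
                    have := h i j h2 h1
                    simp only [Fin.val_succ]
                    omega

lemma fix0 {m : ℕ} (π : Perm (Fin (m + 1))) (h : π 0 = 0) :
    π = decomposeFin.symm (0, (decomposeFin π).2) := by
  have h1 : decomposeFin.symm (decomposeFin π) = π := decomposeFin.symm_apply_apply π
  have hp : (decomposeFin π).1 = 0 := by
    have h2 : decomposeFin.symm ((decomposeFin π).1, (decomposeFin π).2) 0
        = (decomposeFin π).1 := decomposeFin_symm_apply_zero _ _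
    rw [← h2, Prod.mk.eta, h1, h]
  rw [← hp, Prod.mk.eta, h1]

lemma exists_rep {n : ℕ} (π : Perm (Fin (n + 2))) (h : AvoidsNonconsec21 π) :
    (∃ σ : Perm (Fin (n + 1)), π = ext1 σ) ∨ (∃ σ : Perm (Fin n), π = ext2 σ) := by
  by_cases h0 : π 0 = 0
  · exact Or.inl ⟨(decomposeFin π).2, fix0 π h0⟩
  · right
    -- π 1 = 0
    have h10 : π 1 = 0 := by
      have hπj : π (π.symm 0) = 0 := π.apply_symm_apply 0
      have hj0 : π.symm 0 ≠ 0 := fun e => h0 (by rw [e] at hπj; exact hπj)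
      have h0j : (0 : Fin (n + 2)) < π.symm 0 := Fin.pos_iff_ne_zero.mpr hj0
      have hlt : π (π.symm 0) < π 0 := by
        rw [hπj]; exact Fin.pos_iff_ne_zero.mpr h0
      have hv := h 0 (π.symm 0) h0j hlt
      have hj1 : π.symm 0 = 1 := Fin.ext (by simpa using hv)
      rw [← hj1]; exact hπj
    -- π 0 = 1
    have h01 : π 0 = 1 := by
      have hπi : π (π.symm 1) = 1 := π.apply_symm_apply 1
      by_cases hi0 : π.symm 1 = 0
      · rw [← hi0]; exact hπi
      · exfalso
        have hi1 : π.symm 1 ≠ 1 := by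
          intro e
          rw [e, h10] at hπi
          exact absurd hπi.symm one_ne_zero
        have hpos : (0 : Fin (n + 2)) < π.symm 1 := Fin.pos_iff_ne_zero.mpr hi0
        have hne1 : π 0 ≠ 1 := fun e => hi0 (π.injective (by rw [hπi, e]))
        have hlt : π (π.symm 1) < π 0 := by
          rw [hπi, Fin.lt_def]
          have v0 : (π 0 : ℕ) ≠ 0 := fun e => h0 (Fin.ext (by simpa using e))
          have v1 : (π 0 : ℕ) ≠ 1 := fun e => hne1 (Fin.ext (by simpa using e))
          simp only [Fin.val_one]
          omega
        have := h 0 (π.symm 1) hpos hlt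
        exact hi1 (Fin.ext (by simpa using this))
    -- decompose
    have hτ0 : (swap (0 : Fin (n + 2)) 1 * π) 0 = 0 := by
      rw [Equiv.Perm.mul_apply, h01, Equiv.swap_apply_right]
    have hτeq := fix0 (swap (0 : Fin (n + 2)) 1 * π) hτ0
    set σ1 := (decomposeFin (swap (0 : Fin (n + 2)) 1 * π)).2 with hσ1
    have hτ1 : (swap (0 : Fin (n + 2)) 1 * π) 1 = 1 := by
      rw [Equiv.Perm.mul_apply, h10, Equiv.swap_apply_left]
    have hσ10 : σ1 0 = 0 := by
      have hs := decomposeFin_symm_apply_succ σ1 (0 : Fin (n + 2)) 0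
      rw [← hτeq, Fin.succ_zero_eq_one, hτ1, Equiv.swap_self, Equiv.refl_apply] at hs
      exact (Fin.succ_injective _ (by rw [← hs, Fin.succ_zero_eq_one])).symm
    have hσ1eq := fix0 σ1 hσ10
    refine ⟨(decomposeFin σ1).2, ?_⟩
    rw [ext2, ← hσ1eq, ← hτeq, ← mul_assoc, Equiv.swap_mul_self, one_mul]

lemma card_step (n : ℕ) :
    Nat.card {π : Perm (Fin (n + 2)) // AvoidsNonconsec21 π}
      = Nat.card {π : Perm (Fin (n + 1)) // AvoidsNonconsec21 π}
        + Nat.card {π : Perm (Fin n) // AvoidsNonconsec21 π} := by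
  rw [← Nat.card_sum]
  refine Nat.card_congr (Equiv.ofBijective
    (fun x => match x with
      | Sum.inl σ => ⟨ext1 σ.1, (avoid_ext1 σ.1).2 σ.2⟩
      | Sum.inr σ => ⟨ext2 σ.1, (avoid_ext2 σ.1).2 σ.2⟩) ⟨?_, ?_⟩).symm
  · rintro (⟨a, ha⟩ | ⟨a, ha⟩) (⟨b, hb⟩ | ⟨b, hb⟩) hab <;>
      simp only [Subtype.mk.injEq] at hab
    · have := decomposeFin.symm.injective hab
      simp only [Prod.mk.injEq] at this
      simp [this.2]
    · exfalso
      have := Equiv.ext_iff.mp hab 0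
      rw [ext1_zero, ext2_zero] at this
      exact absurd this.symm one_ne_zero
    · exfalso
      have := Equiv.ext_iff.mp hab 0
      rw [ext2_zero, ext1_zero] at this
      exact absurd this one_ne_zero
    · have h1 : (decomposeFin.symm (0, decomposeFin.symm (0, a)) : Perm (Fin (n+2)))
          = decomposeFin.symm (0, decomposeFin.symm (0, b)) := by
        have := mul_left_cancel (a := swap (0 : Fin (n+2)) 1) hab
        exact this
      have h2 := decomposeFin.symm.injective h1
      simp only [Prod.mk.injEq] at h2
      have h3 := decomposeFin.symm.injective h2.2
      simp only [Prod.mk.injEq] at h3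
      simp [h3.2]
  · rintro ⟨π, hπ⟩
    rcases exists_rep π hπ with ⟨σ, rfl⟩ | ⟨σ, rfl⟩
    · exact ⟨Sum.inl ⟨σ, (avoid_ext1 σ).1 hπ⟩, rfl⟩
    · exact ⟨Sum.inr ⟨σ, (avoid_ext2 σ).1 hπ⟩, rfl⟩

lemma card_zero : Nat.card {π : Perm (Fin 0) // AvoidsNonconsec21 π} = 1 := by
  haveI : Unique {π : Perm (Fin 0) // AvoidsNonconsec21 π} :=
    { default := ⟨1, fun i => i.elim0⟩
      uniq := fun x => Subtype.ext (Equiv.ext fun i => i.elim0) }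
  exact Nat.card_unique

lemma card_one : Nat.card {π : Perm (Fin 1) // AvoidsNonconsec21 π} = 1 := by
  haveI : Unique {π : Perm (Fin 1) // AvoidsNonconsec21 π} :=
    { default := ⟨1, by
        intro i j hij hlt
        rw [Fin.lt_def] at hij
        have := i.2; have := j.2
        omega⟩
      uniq := fun x => Subtype.ext (Equiv.ext fun i => Subsingleton.elim _ _) }
  exact Nat.card_unique

end AvoidAux

theorem card_avoiding_nonconsec21_eq_fib (n : ℕ) :
    Nat.card {π : Equiv.Perm (Fin n) // AvoidsNonconsec21 π} = Nat.fib (n + 1) := by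
  induction n using Nat.strong_induction_on with
  | _ n ih =>
    match n with
    | 0 => simpa using AvoidAux.card_zero
    | 1 => simpa using AvoidAux.card_one
    | (m + 2) =>
      rw [AvoidAux.card_step, ih (m + 1) (by omega), ih m (by omega),
        show m + 2 + 1 = (m + 1) + 2 from rfl, Nat.fib_add_two (n := m + 1)]
      omega
end

section
/- A permutation of {1,...,n} avoids a nonconsecutive 21 pattern if and only if it is obtained from the identity permutation by choosing a set of pairwise disjoint pairs {i,i+1} of consecutive integers and swapping the entries in positions i and i+1 for each chosen pair. -/
namespace AvoidsAux

variable {n : ℕ} {π : Equiv.Perm (Fin n)}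

lemma lemA (h : AvoidsNonconsec21 π) (p : Fin n) : (π p : ℕ) ≤ (p : ℕ) + 1 := by
  by_contra hc
  push_neg at hc
  have hcard : ((Finset.Iio (π p)).map π.symm.toEmbedding).card = (π p : ℕ) := by
    rw [Finset.card_map, Fin.card_Iio]
  have hsub : ((Finset.Iio (π p)).map π.symm.toEmbedding).image Fin.val ⊆
      insert ((p : ℕ) + 1) (Finset.range (p : ℕ)) := by
    intro x hx
    simp only [Finset.mem_image, Finset.mem_map, Finset.mem_Iio,
      Equiv.coe_toEmbedding] at hx
    obtain ⟨j, ⟨a, ha, rfl⟩, rfl⟩ := hx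
    have hja : π (π.symm a) = a := Equiv.apply_symm_apply π a
    simp only [Finset.mem_insert, Finset.mem_range]
    rcases lt_trichotomy (π.symm a) p with hlt | heq | hgt
    · right; exact hlt
    · exfalso
      rw [heq] at hja
      rw [hja] at ha
      exact lt_irrefl _ ha
    · left
      have := h p (π.symm a) hgt (by rwa [hja])
      omega
  have h1 : (((Finset.Iio (π p)).map π.symm.toEmbedding).image Fin.val).card
      = (π p : ℕ) := by
    rw [Finset.card_image_of_injective _ Fin.val_injective, hcard]
  have h2 := Finset.card_le_card hsub
  rw [h1] at h2
  have := Finset.card_insert_le ((p : ℕ) + 1) (Finset.range (p : ℕ))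
  simp only [Finset.card_range] at this
  omega

lemma lemB (h : AvoidsNonconsec21 π) (p : Fin n) : (p : ℕ) ≤ (π p : ℕ) + 1 := by
  by_contra hc
  push_neg at hc
  have hcard : ((Finset.Ioi (π p)).map π.symm.toEmbedding).card = n - 1 - (π p : ℕ) := by
    rw [Finset.card_map, Fin.card_Ioi]
  have hsub : ((Finset.Ioi (π p)).map π.symm.toEmbedding).image Fin.val ⊆
      insert ((p : ℕ) - 1) (Finset.Ico ((p : ℕ) + 1) n) := by
    intro x hx
    simp only [Finset.mem_image, Finset.mem_map, Finset.mem_Ioi,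
      Equiv.coe_toEmbedding] at hx
    obtain ⟨j, ⟨a, ha, rfl⟩, rfl⟩ := hx
    have hja : π (π.symm a) = a := Equiv.apply_symm_apply π a
    simp only [Finset.mem_insert, Finset.mem_Ico]
    rcases lt_trichotomy (π.symm a) p with hlt | heq | hgt
    · left
      have := h (π.symm a) p hlt (by rwa [hja])
      omega
    · exfalso
      rw [heq] at hja
      rw [hja] at ha
      exact lt_irrefl _ ha
    · right
      exact ⟨by exact_mod_cast hgt, (π.symm a).isLt⟩
  have h1 : (((Finset.Ioi (π p)).map π.symm.toEmbedding).image Fin.val).card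
      = n - 1 - (π p : ℕ) := by
    rw [Finset.card_image_of_injective _ Fin.val_injective, hcard]
  have h2 := Finset.card_le_card hsub
  rw [h1] at h2
  have h3 := Finset.card_insert_le ((p : ℕ) - 1) (Finset.Ico ((p : ℕ) + 1) n)
  rw [Nat.card_Ico] at h3
  have hp : (p : ℕ) < n := p.isLt
  have hpp : (π p : ℕ) < n := (π p).isLt
  omega

lemma lemC (h : AvoidsNonconsec21 π) :
    ∀ p : ℕ, ∀ hp : p < n, ∀ hp1 : p + 1 < n,
      (π ⟨p, hp⟩ : ℕ) = p + 1 → (π ⟨p + 1, hp1⟩ : ℕ) = p := by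
  intro p
  induction p using Nat.strong_induction_on with
  | _ p IH =>
    intro hp hp1 hval
    have hj : π (π.symm ⟨p, hp⟩) = ⟨p, hp⟩ := Equiv.apply_symm_apply π _
    have hjv : (π (π.symm ⟨p, hp⟩) : ℕ) = p := by rw [hj]
    have hA := lemA h (π.symm ⟨p, hp⟩)
    have hB := lemB h (π.symm ⟨p, hp⟩)
    rw [hjv] at hA hB
    have hjne : ((π.symm ⟨p, hp⟩ : Fin n) : ℕ) ≠ p := by
      intro hee
      have he2 : π.symm ⟨p, hp⟩ = ⟨p, hp⟩ := Fin.ext hee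
      rw [he2] at hj
      have : (π ⟨p, hp⟩ : ℕ) = p := by rw [hj]
      omega
    rcases Nat.lt_or_ge ((π.symm ⟨p, hp⟩ : Fin n) : ℕ) p with hlt | hge
    · exfalso
      have hp1' : 1 ≤ p := by omega
      have hsm : p - 1 < n := by omega
      have hjeq : π.symm ⟨p, hp⟩ = ⟨p - 1, hsm⟩ := Fin.ext (by
        simp only [Fin.val_mk]; omega)
      have hval' : (π ⟨p - 1, hsm⟩ : ℕ) = (p - 1) + 1 := by
        rw [← hjeq, hjv]; omega
      have hplt : p - 1 + 1 < n := by omega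
      have hIH := IH (p - 1) (by omega) hsm hplt hval'
      have hcast : (⟨p - 1 + 1, hplt⟩ : Fin n) = ⟨p, hp⟩ := Fin.ext (by
        simp only [Fin.val_mk]; omega)
      rw [hcast] at hIH
      omega
    · have hjp : π.symm ⟨p, hp⟩ = ⟨p + 1, hp1⟩ := Fin.ext (by
        simp only [Fin.val_mk]; omega)
      rw [← hjp, hjv]

lemma lemD (h : AvoidsNonconsec21 π) :
    ∀ p : ℕ, ∀ hp : p < n, 1 ≤ p → (π ⟨p, hp⟩ : ℕ) = p - 1 →
      ∀ hq : p - 1 < n, (π ⟨p - 1, hq⟩ : ℕ) = p := by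
  intro p
  induction p using Nat.strong_induction_on with
  | _ p IH =>
    intro hp hp1 hval hq
    have hA := lemA h (⟨p - 1, hq⟩ : Fin n)
    have hB := lemB h (⟨p - 1, hq⟩ : Fin n)
    simp only [Fin.val_mk] at hA hB
    have htne : (π ⟨p - 1, hq⟩ : ℕ) ≠ p - 1 := by
      intro hee
      have heq : π ⟨p - 1, hq⟩ = π ⟨p, hp⟩ := Fin.ext (by omega)
      have := congrArg Fin.val (π.injective heq)
      simp only [Fin.val_mk] at this
      omega
    rcases Nat.lt_or_ge (π ⟨p - 1, hq⟩ : ℕ) (p - 1) with hlt | hge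
    · exfalso
      have hp2 : 2 ≤ p := by omega
      have hval' : (π ⟨p - 1, hq⟩ : ℕ) = (p - 1) - 1 := by omega
      have hq2 : p - 1 - 1 < n := by omega
      have hIH := IH (p - 1) (by omega) hq (by omega) hval' hq2
      have heq : π ⟨p - 1 - 1, hq2⟩ = π ⟨p, hp⟩ := Fin.ext (by omega)
      have := congrArg Fin.val (π.injective heq)
      simp only [Fin.val_mk] at this
      omega
    · omega

end AvoidsAux

/-- A permutation avoids a nonconsecutive 21 pattern iff it is obtained from the identity
by swapping the entries in positions `i, i+1` for each `i` in a set `S` of pairwise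
disjoint pairs of consecutive positions (the starting positions in `S` differ by at
least 2, so the pairs are pairwise disjoint). -/
theorem avoidsNonconsec21_iff_product_of_disjoint_adjacent_swaps
    (n : ℕ) (π : Equiv.Perm (Fin n)) :
    AvoidsNonconsec21 π ↔
      ∃ S : Finset ℕ,
        (∀ i ∈ S, i + 1 < n) ∧
        (∀ i ∈ S, ∀ j ∈ S, i ≠ j → 2 ≤ max i j - min i j) ∧
        (∀ p : Fin n,
          ((p : ℕ) ∈ S → (π p : ℕ) = (p : ℕ) + 1) ∧
          (∀ i ∈ S, (p : ℕ) = i + 1 → (π p : ℕ) = i) ∧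
          (((p : ℕ) ∉ S ∧ ∀ i ∈ S, (p : ℕ) ≠ i + 1) → π p = p)) := by
  constructor
  · intro h
    refine ⟨(Finset.univ.filter (fun p : Fin n => (π p : ℕ) = (p : ℕ) + 1)).image Fin.val,
      ?_, ?_, ?_⟩
    · intro i hi
      simp only [Finset.mem_image, Finset.mem_filter, Finset.mem_univ, true_and] at hi
      obtain ⟨q, hq, rfl⟩ := hi
      rw [← hq]; exact (π q).isLt
    · have key : ∀ i ∈ (Finset.univ.filter
          (fun p : Fin n => (π p : ℕ) = (p : ℕ) + 1)).image Fin.val,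
          ∀ j ∈ (Finset.univ.filter
          (fun p : Fin n => (π p : ℕ) = (p : ℕ) + 1)).image Fin.val,
          j ≠ i + 1 := by
        intro i hi j hj hji
        simp only [Finset.mem_image, Finset.mem_filter, Finset.mem_univ, true_and] at hi hj
        obtain ⟨q, hq, rfl⟩ := hi
        obtain ⟨r, hr, hrj⟩ := hj
        have hq1 : (q : ℕ) + 1 < n := by rw [← hq]; exact (π q).isLt
        have hC := AvoidsAux.lemC h q q.isLt hq1 (by simpa using hq)
        have hre : r = ⟨(q : ℕ) + 1, hq1⟩ := Fin.ext (by
          simp only [Fin.val_mk]; omega)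
        rw [hre] at hr
        simp only [Fin.val_mk] at hr
        omega
      intro i hi j hj hij
      have h1 := key i hi j hj
      have h2 := key j hj i hi
      omega
    · intro p
      refine ⟨?_, ?_, ?_⟩
      · intro hp
        simp only [Finset.mem_image, Finset.mem_filter, Finset.mem_univ, true_and] at hp
        obtain ⟨q, hq, hqp⟩ := hp
        have hqe : q = p := Fin.ext hqp
        rw [← hqe, hq, hqe]
      · intro i hi hpi
        simp only [Finset.mem_image, Finset.mem_filter, Finset.mem_univ, true_and] at hi
        obtain ⟨q, hq, rfl⟩ := hi
        have hq1 : (q : ℕ) + 1 < n := by rw [← hq]; exact (π q).isLt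
        have hC := AvoidsAux.lemC h q q.isLt hq1 (by simpa using hq)
        have hpe : p = ⟨(q : ℕ) + 1, hq1⟩ := Fin.ext (by
          simp only [Fin.val_mk]; omega)
        rw [hpe, hC]
      · rintro ⟨hp1, hp2⟩
        have hA := AvoidsAux.lemA h p
        have hB := AvoidsAux.lemB h p
        have hne1 : (π p : ℕ) ≠ (p : ℕ) + 1 := by
          intro he
          exact hp1 (Finset.mem_image.2 ⟨p, Finset.mem_filter.2 ⟨Finset.mem_univ _, he⟩, rfl⟩)
        rcases Nat.lt_or_ge (π p : ℕ) (p : ℕ) with hlt | hge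
        · exfalso
          have hp0 : 1 ≤ (p : ℕ) := by omega
          have hpe : (⟨(p : ℕ), p.isLt⟩ : Fin n) = p := Fin.ext rfl
          have hval : (π ⟨(p : ℕ), p.isLt⟩ : ℕ) = (p : ℕ) - 1 := by
            rw [hpe]; omega
          have hq : (p : ℕ) - 1 < n := by omega
          have hD := AvoidsAux.lemD h (p : ℕ) p.isLt hp0 hval hq
          have hmem : (p : ℕ) - 1 ∈ (Finset.univ.filter
              (fun q : Fin n => (π q : ℕ) = (q : ℕ) + 1)).image Fin.val := by
            refine Finset.mem_image.2 ⟨⟨(p : ℕ) - 1, hq⟩,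
              Finset.mem_filter.2 ⟨Finset.mem_univ _, ?_⟩, rfl⟩
            simp only [Fin.val_mk]
            omega
          exact hp2 _ hmem (by omega)
        · exact Fin.ext (by omega)
  · rintro ⟨S, hlt, _, hpt⟩ i j hij hinv
    have bound : ∀ p : Fin n, (p : ℕ) ≤ (π p : ℕ) + 1 ∧ (π p : ℕ) ≤ (p : ℕ) + 1 := by
      intro p
      obtain ⟨c1, c2, c3⟩ := hpt p
      by_cases h1 : (p : ℕ) ∈ S
      · have := c1 h1; omega
      · by_cases h2 : ∃ i ∈ S, (p : ℕ) = i + 1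
        · obtain ⟨i, hiS, hpi⟩ := h2
          have := c2 i hiS hpi; omega
        · push_neg at h2
          have := c3 ⟨h1, h2⟩
          rw [this]; omega
    have b1 := bound i
    have b2 := bound j
    have hv : (π j : ℕ) < (π i : ℕ) := hinv
    have hv2 : (i : ℕ) < (j : ℕ) := hij
    omega
end

section
/- The map sending a permutation of {1,...,n} avoiding a nonconsecutive 21 pattern to its set of descent positions is a bijection onto the set of scattered subsets of {1,...,n-1} (subsets whose distinct elements differ by at least 2). -/
/-- The set of (1-indexed) descent positions of a permutation: `i ∈ {1,…,n-1}` such that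
the entry in position `i` exceeds the entry in position `i+1` (0-indexed: `π (i-1) > π i`). -/
noncomputable def descentSet {n : ℕ} (π : Equiv.Perm (Fin n)) : Finset ℕ :=
  Finset.image (fun i : Fin n => (i : ℕ) + 1)
    ((Finset.univ : Finset (Fin n)).filter
      (fun (i : Fin n) => ∃ h : (i : ℕ) + 1 < n, π ⟨(i : ℕ) + 1, h⟩ < π i))

namespace NCAux
variable {n : ℕ}

def Bounds (π : Equiv.Perm (Fin n)) : Prop :=
  ∀ k : Fin n, (π k : ℕ) ≤ (k:ℕ) + 1 ∧ (k:ℕ) ≤ (π k : ℕ) + 1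

lemma avoids_le {π : Equiv.Perm (Fin n)} (h : AvoidsNonconsec21 π) (i : Fin n) :
    (π i : ℕ) ≤ (i : ℕ) + 1 := by
  by_contra hc
  push_neg at hc
  have hex : ∃ j : Fin n, (i:ℕ) < j ∧ (π j : ℕ) ≤ i := by
    by_contra hno
    push_neg at hno
    have hsub : (Finset.univ.filter fun k : Fin n => (π k : ℕ) ≤ i) ⊆ Finset.Iio i := by
      intro k hk
      simp only [Finset.mem_filter] at hk
      rw [Finset.mem_Iio, Fin.lt_def]
      rcases lt_trichotomy (k:ℕ) (i:ℕ) with h1|h1|h1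
      · exact h1
      · exfalso; have : k = i := Fin.ext h1; subst this; omega
      · exact absurd hk.2 (by have := hno k h1; omega)
    have hcard : (Finset.univ.filter fun k : Fin n => (π k : ℕ) ≤ i).card = (i:ℕ) + 1 := by
      have he : (Finset.univ.filter fun k : Fin n => (π k : ℕ) ≤ i)
          = Finset.map π.symm.toEmbedding (Finset.Iic i) := by
        ext k
        simp only [Finset.mem_filter, Finset.mem_univ, true_and, Finset.mem_map,
          Finset.mem_Iic, Equiv.coe_toEmbedding]
        constructor
        · intro hk; exact ⟨π k, Fin.le_def.mpr hk, π.symm_apply_apply k⟩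
        · rintro ⟨v, hv, rfl⟩; rw [Equiv.apply_symm_apply]; exact Fin.le_def.mp hv
      rw [he, Finset.card_map, Fin.card_Iic]
    have hle := Finset.card_le_card hsub
    rw [hcard, Fin.card_Iio] at hle
    omega
  obtain ⟨j, hij, hji⟩ := hex
  have hj := h i j (Fin.lt_def.mpr hij) (Fin.lt_def.mpr (by omega))
  have hjn : (i:ℕ) + 1 < n := by have := j.2; omega
  set v : Fin n := ⟨(i:ℕ)+1, hjn⟩ with hv
  set k := π.symm v with hk
  have hpk : π k = v := π.apply_symm_apply v
  have hki : k ≠ i := by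
    intro he; rw [he] at hpk; rw [hpk] at hc; simp [hv] at hc
  have hkj : k ≠ j := by
    intro he; rw [he] at hpk; rw [hpk] at hji; simp [hv] at hji
  rcases lt_trichotomy (k:ℕ) (i:ℕ) with h1|h1|h1
  · have := h k j (Fin.lt_def.mpr (by omega)) (Fin.lt_def.mpr (by rw [hpk]; simp [hv]; omega))
    omega
  · exact hki (Fin.ext h1)
  · have hk2 : (i:ℕ) + 2 ≤ k := by
      rcases Nat.lt_or_ge (k:ℕ) ((i:ℕ)+2) with h2|h2
      · exfalso; exact hkj (Fin.ext (by omega))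
      · exact h2
    have := h i k (Fin.lt_def.mpr (by omega)) (Fin.lt_def.mpr (by rw [hpk]; simp [hv]; omega))
    omega

lemma avoids_ge {π : Equiv.Perm (Fin n)} (h : AvoidsNonconsec21 π) (i : Fin n) :
    (i : ℕ) ≤ (π i : ℕ) + 1 := by
  by_contra hc
  push_neg at hc
  have hi2 : 2 ≤ (i:ℕ) := by omega
  set m : ℕ := (i:ℕ) - 1 with hm
  have hmn : m < n := by have := i.2; omega
  set vm : Fin n := ⟨m, hmn⟩ with hvm
  set V := Finset.univ.filter (fun k : Fin n => m ≤ (π k : ℕ)) with hV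
  have hVcard : V.card = n - m := by
    have he : V = Finset.map π.symm.toEmbedding (Finset.Ici vm) := by
      ext k
      simp only [hV, Finset.mem_filter, Finset.mem_univ, true_and, Finset.mem_map,
        Finset.mem_Ici, Equiv.coe_toEmbedding]
      constructor
      · intro hk; exact ⟨π k, Fin.le_def.mpr hk, π.symm_apply_apply k⟩
      · rintro ⟨v, hv, rfl⟩; rw [Equiv.apply_symm_apply]; exact Fin.le_def.mp hv
    rw [he, Finset.card_map, Fin.card_Ici]
  have hsub : V ⊆ (V.filter fun k : Fin n => (k:ℕ) < i) ∪ Finset.Ioi i := by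
    intro k hk
    rcases lt_trichotomy (k:ℕ) (i:ℕ) with h1|h1|h1
    · exact Finset.mem_union_left _ (Finset.mem_filter.mpr ⟨hk, h1⟩)
    · exfalso
      have : k = i := Fin.ext h1
      subst this
      have := (Finset.mem_filter.mp hk).2
      omega
    · exact Finset.mem_union_right _ (Finset.mem_Ioi.mpr (Fin.lt_def.mpr h1))
  have hcard2 : 2 ≤ (V.filter fun k : Fin n => (k:ℕ) < i).card := by
    have h1 := Finset.card_le_card hsub
    have h2 := Finset.card_union_le (V.filter fun k : Fin n => (k:ℕ) < i) (Finset.Ioi i)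
    rw [Fin.card_Ioi] at h2
    have := i.2
    omega
  obtain ⟨p, hp, q, hq, hpq⟩ := Finset.one_lt_card.mp hcard2
  simp only [Finset.mem_filter, hV, Finset.mem_univ, true_and] at hp hq
  have key : ∀ r : Fin n, m ≤ (π r : ℕ) → (r:ℕ) + 2 ≤ i → False := by
    intro r h1 h2
    have := h r i (Fin.lt_def.mpr (by omega)) (Fin.lt_def.mpr (by omega))
    omega
  have hpqv : (p:ℕ) ≠ (q:ℕ) := fun he => hpq (Fin.ext he)
  rcases Nat.lt_or_ge (p:ℕ) (q:ℕ) with h1|h1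
  · exact key p hp.1 (by omega)
  · exact key q hq.1 (by omega)

lemma avoids_bounds {π : Equiv.Perm (Fin n)} (h : AvoidsNonconsec21 π) : Bounds π :=
  fun k => ⟨avoids_le h k, avoids_ge h k⟩

lemma bounds_symm {π : Equiv.Perm (Fin n)} (hb : Bounds π) : Bounds π.symm := by
  intro k
  have h1 := (hb (π.symm k)).1
  have h2 := (hb (π.symm k)).2
  rw [Equiv.apply_symm_apply] at h1 h2
  exact ⟨by omega, by omega⟩

lemma bounds_avoids {π : Equiv.Perm (Fin n)} (hb : Bounds π) : AvoidsNonconsec21 π := by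
  intro i j hij hji
  have h1 := (hb i).1
  have h2 := (hb j).2
  rw [Fin.lt_def] at hij hji
  omega

lemma swap_back {π : Equiv.Perm (Fin n)} (hb : Bounds π) :
    ∀ i j : Fin n, (j:ℕ) = (i:ℕ) + 1 → (π j : ℕ) = (i:ℕ) → (π i : ℕ) = (j:ℕ) := by
  suffices H : ∀ m : ℕ, ∀ i j : Fin n, (i:ℕ) = m → (j:ℕ) = (i:ℕ) + 1 →
      (π j : ℕ) = (i:ℕ) → (π i : ℕ) = (j:ℕ) by
    intro i j h1 h2; exact H (i:ℕ) i j rfl h1 h2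
  intro m
  induction m using Nat.strong_induction_on with
  | _ m IH =>
    intro i j him hji hpj
    have hne : j ≠ i := fun he => by rw [he] at hji; omega
    have hpne : π i ≠ π j := fun he => hne (π.injective he.symm)
    have h1 := (hb i).1
    have h2 := (hb i).2
    rcases lt_trichotomy ((π i : ℕ)) ((i:ℕ)) with hlt|heq|hgt
    · exfalso
      have hi1 : 1 ≤ (i:ℕ) := by omega
      set i' : Fin n := ⟨(i:ℕ) - 1, by omega⟩ with hi'
      have hpi : (π i : ℕ) = (i':ℕ) := by simp [hi']; omega
      have := IH ((i':ℕ)) (by simp [hi']; omega) i' i rfl (by simp [hi']; omega) hpi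
      have hji' : π i' = π j := Fin.ext (by omega)
      have : i' = j := π.injective hji'
      rw [this] at hi'
      have : (j:ℕ) = (i:ℕ) - 1 := by rw [hi']
      omega
    · exfalso; exact hpne (Fin.ext (by omega))
    · omega

lemma swap_forward {π : Equiv.Perm (Fin n)} (hb : Bounds π) (i j : Fin n)
    (hji : (j:ℕ) = (i:ℕ) + 1) (hpi : (π i : ℕ) = (j:ℕ)) : (π j : ℕ) = (i:ℕ) := by
  have hs : (π.symm j : ℕ) = (i:ℕ) := by
    have he : π i = j := Fin.ext hpi
    rw [← he, Equiv.symm_apply_apply]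
  have := swap_back (bounds_symm hb) i j hji hs
  have hh : π.symm i = j := Fin.ext this
  have := congrArg π hh
  rw [Equiv.apply_symm_apply] at this
  exact (Fin.ext_iff.mp this.symm)

lemma down_swap {π : Equiv.Perm (Fin n)} (hb : Bounds π) {i : Fin n}
    (hlt : (π i : ℕ) < (i:ℕ)) :
    ∃ i' : Fin n, ((i':ℕ) = (i:ℕ) - 1) ∧ (π i' : ℕ) = (i:ℕ) := by
  have hi1 : 1 ≤ (i:ℕ) := by omega
  have h2 := (hb i).2
  refine ⟨⟨(i:ℕ)-1, by have := i.2; omega⟩, rfl, ?_⟩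
  exact swap_back hb _ i (by simp; omega) (by simp; omega)

lemma descent_iff {π : Equiv.Perm (Fin n)} (hb : Bounds π) (i : Fin n) (hi : (i:ℕ)+1 < n) :
    π ⟨(i:ℕ)+1, hi⟩ < π i ↔ (π i : ℕ) = (i:ℕ) + 1 := by
  constructor
  · intro hd
    have h1 := (hb i).1
    have h2 := (hb ⟨(i:ℕ)+1, hi⟩).2
    rw [Fin.lt_def] at hd
    simp only [Fin.val_mk] at h2
    omega
  · intro hd
    have := swap_forward hb i ⟨(i:ℕ)+1, hi⟩ (by simp) (by simpa using hd)
    rw [Fin.lt_def, this, hd]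
    omega

lemma mem_descentSet_iff {π : Equiv.Perm (Fin n)} (hb : Bounds π) (m : ℕ) :
    m ∈ descentSet π ↔ ∃ i : Fin n, (π i : ℕ) = (i:ℕ) + 1 ∧ m = (i:ℕ) + 1 := by
  unfold descentSet
  simp only [Finset.mem_image, Finset.mem_filter, Finset.mem_univ, true_and]
  constructor
  · rintro ⟨i, ⟨hlt, hd⟩, rfl⟩
    exact ⟨i, (descent_iff hb i hlt).mp hd, rfl⟩
  · rintro ⟨i, hd, rfl⟩
    have hi : (i:ℕ)+1 < n := by have := (π i).2; omega
    exact ⟨i, ⟨hi, (descent_iff hb i hi).mpr hd⟩, rfl⟩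

lemma no_adjacent {π : Equiv.Perm (Fin n)} (h : AvoidsNonconsec21 π) {i j : Fin n}
    (hji : (j:ℕ) = (i:ℕ)+1)
    (h1 : ∃ hh : (i:ℕ)+1 < n, π ⟨(i:ℕ)+1, hh⟩ < π i)
    (h2 : ∃ hh : (j:ℕ)+1 < n, π ⟨(j:ℕ)+1, hh⟩ < π j) : False := by
  obtain ⟨hi1, hd1⟩ := h1
  obtain ⟨hj1, hd2⟩ := h2
  have hji' : (⟨(i:ℕ)+1, hi1⟩ : Fin n) = j := Fin.ext (by simp [hji])
  rw [hji'] at hd1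
  have := h i ⟨(j:ℕ)+1, hj1⟩ (Fin.lt_def.mpr (by simp; omega)) (lt_trans hd2 hd1)
  simp at this; omega

def swapFun (S : Finset ℕ) (hS : ∀ m ∈ S, m < n) : Fin n → Fin n := fun i =>
  if h1 : (i:ℕ)+1 ∈ S then ⟨(i:ℕ)+1, hS _ h1⟩
  else if (i:ℕ) ∈ S then ⟨(i:ℕ)-1, lt_of_le_of_lt (Nat.sub_le _ _) i.2⟩
  else i

lemma swapFun_val (S : Finset ℕ) (hS : ∀ m ∈ S, m < n) (i : Fin n) :
    (swapFun S hS i : ℕ)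
      = if (i:ℕ)+1 ∈ S then (i:ℕ)+1 else if (i:ℕ) ∈ S then (i:ℕ)-1 else (i:ℕ) := by
  unfold swapFun
  split_ifs <;> rfl

end NCAux

open NCAux in
/-- The descent-set map is a bijection from permutations avoiding a nonconsecutive 21
pattern onto the scattered subsets of `{1,…,n-1}`. -/
theorem descentSet_bijOn (n : ℕ) :
    Set.BijOn (descentSet (n := n))
      {π : Equiv.Perm (Fin n) | AvoidsNonconsec21 π}
      {S : Finset ℕ | S ⊆ Finset.Icc 1 (n - 1) ∧
        ∀ a ∈ S, ∀ b ∈ S, a ≠ b → 2 ≤ max a b - min a b} := by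
  refine ⟨?_, ?_, ?_⟩
  · -- MapsTo
    intro π hπ
    simp only [Set.mem_setOf_eq] at hπ ⊢
    constructor
    · intro m hm
      simp only [descentSet, Finset.mem_image, Finset.mem_filter, Finset.mem_univ,
        true_and] at hm
      obtain ⟨i, ⟨hlt, _⟩, rfl⟩ := hm
      exact Finset.mem_Icc.mpr ⟨by omega, by omega⟩
    · intro a ha b hb hab
      simp only [descentSet, Finset.mem_image, Finset.mem_filter, Finset.mem_univ,
        true_and] at ha hb
      obtain ⟨i, hdi, rfl⟩ := ha
      obtain ⟨j, hdj, rfl⟩ := hb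
      have hij : (i:ℕ) ≠ (j:ℕ) := by intro he; exact hab (by omega)
      have h1 : (j:ℕ) ≠ (i:ℕ) + 1 := fun he => no_adjacent hπ he hdi hdj
      have h2 : (i:ℕ) ≠ (j:ℕ) + 1 := fun he => no_adjacent hπ he hdj hdi
      omega
  · -- InjOn
    intro π hπ σ hσ heq
    simp only [Set.mem_setOf_eq] at hπ hσ
    have hbπ := avoids_bounds hπ
    have hbσ := avoids_bounds hσ
    have hD : ∀ τ : Equiv.Perm (Fin n), Bounds τ → descentSet τ = descentSet π →
        ∀ i : Fin n, (π i : ℕ) = (i:ℕ) + 1 → (τ i : ℕ) = (i:ℕ) + 1 := by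
      intro τ hbτ hDτ i hi
      have hm : ((i:ℕ)+1) ∈ descentSet π := (mem_descentSet_iff hbπ _).mpr ⟨i, hi, rfl⟩
      rw [← hDτ] at hm
      obtain ⟨i', hd', he'⟩ := (mem_descentSet_iff hbτ _).mp hm
      have : i' = i := Fin.ext (by omega)
      rw [← this]; omega
    have hDπσ : ∀ i : Fin n, (π i : ℕ) = (i:ℕ) + 1 ↔ (σ i : ℕ) = (i:ℕ) + 1 := by
      intro i
      constructor
      · intro hi
        exact hD σ hbσ heq.symm i hi
      · intro hi
        -- symmetric: σ i = i+1 → i+1 ∈ descentSet σ = descentSet π → π i = i+1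
        have hm : ((i:ℕ)+1) ∈ descentSet σ := (mem_descentSet_iff hbσ _).mpr ⟨i, hi, rfl⟩
        rw [← heq] at hm
        obtain ⟨i', hd', he'⟩ := (mem_descentSet_iff hbπ _).mp hm
        have : i' = i := Fin.ext (by omega)
        rw [← this]; omega
    apply Equiv.ext
    intro i
    have h1π := (hbπ i).1
    have h2π := (hbπ i).2
    have h1σ := (hbσ i).1
    have h2σ := (hbσ i).2
    rcases lt_trichotomy ((π i : ℕ)) ((i:ℕ)) with hlt|heqv|hgt
    · -- π i = i - 1
      have hi1 : 1 ≤ (i:ℕ) := by omega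
      obtain ⟨i', hi'v, hπi'⟩ := down_swap hbπ hlt
      have hσi' : (σ i' : ℕ) = (i':ℕ) + 1 := (hDπσ i').mp (by omega)
      have hσi'2 : (σ i' : ℕ) = (i:ℕ) := by omega
      have hne : (σ i : ℕ) ≠ (i:ℕ) := by
        intro he
        have h3 : σ i = σ i' := Fin.ext (by omega)
        have h4 := σ.injective h3
        rw [Fin.ext_iff] at h4
        omega
      have hne2 : (σ i : ℕ) ≠ (i:ℕ) + 1 := by
        intro he
        have := (hDπσ i).mpr he
        omega
      apply Fin.ext
      omega
    · -- π i = i : show σ i = i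
      apply Fin.ext
      by_contra hne
      rcases lt_trichotomy ((σ i : ℕ)) ((i:ℕ)) with h1|h2|h3
      · obtain ⟨i', hi'v, hσi'⟩ := down_swap hbσ h1
        have hπi' : (π i' : ℕ) = (i':ℕ) + 1 := (hDπσ i').mpr (by omega)
        have hpp : π i' = π i := Fin.ext (by omega)
        have h4 := π.injective hpp
        rw [Fin.ext_iff] at h4
        omega
      · exact hne (heqv.trans h2.symm)
      · have hσ1 : (σ i : ℕ) = (i:ℕ) + 1 := by omega
        have := (hDπσ i).mpr hσ1
        omega
    · -- π i = i+1
      have hπi : (π i : ℕ) = (i:ℕ) + 1 := by omega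
      have hσi := (hDπσ i).mp hπi
      exact Fin.ext (by omega)
  · -- SurjOn
    intro S hS
    simp only [Set.mem_setOf_eq] at hS
    obtain ⟨hsub, hscat⟩ := hS
    have hSlt : ∀ m ∈ S, m < n := by
      intro m hm
      have := Finset.mem_Icc.mp (hsub hm)
      omega
    have hS1 : ∀ m ∈ S, 1 ≤ m := by
      intro m hm
      exact (Finset.mem_Icc.mp (hsub hm)).1
    set f := swapFun S hSlt with hf
    have hnadj : ∀ m ∈ S, ¬ (m + 1 ∈ S) := by
      intro m hm hc
      have := hscat m hm (m+1) hc (by omega)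
      omega
    have hinv : ∀ i : Fin n, f (f i) = i := by
      intro i
      apply Fin.ext
      rw [hf, swapFun_val, swapFun_val]
      by_cases h1 : (i:ℕ)+1 ∈ S
      · have hn2 : ¬ ((i:ℕ)+1+1 ∈ S) := hnadj _ h1
        simp [h1, hn2]
      · by_cases h2 : (i:ℕ) ∈ S
        · have hi1 : 1 ≤ (i:ℕ) := hS1 _ h2
          have hr : (i:ℕ) - 1 + 1 = (i:ℕ) := by omega
          simp [h1, h2, hr]
        · simp [h1, h2]
    set π : Equiv.Perm (Fin n) := ⟨f, f, hinv, hinv⟩ with hπ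
    have hπval : ∀ i : Fin n, (π i : ℕ)
        = if (i:ℕ)+1 ∈ S then (i:ℕ)+1 else if (i:ℕ) ∈ S then (i:ℕ)-1 else (i:ℕ) := by
      intro i
      show (f i : ℕ) = _
      rw [hf, swapFun_val]
    have hbπ : Bounds π := by
      intro k
      rw [hπval k]
      split_ifs <;> omega
    have hchar : ∀ i : Fin n, ((π i : ℕ) = (i:ℕ)+1) ↔ (i:ℕ)+1 ∈ S := by
      intro i
      rw [hπval i]
      by_cases h1 : (i:ℕ)+1 ∈ S
      · simp [h1]
      · by_cases h2 : (i:ℕ) ∈ S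
        · rw [if_neg h1, if_pos h2]
          constructor
          · intro hcc; exact absurd hcc (by omega)
          · intro hcc; exact absurd hcc h1
        · simp [h1, h2]
    refine ⟨π, bounds_avoids hbπ, ?_⟩
    ext m
    rw [mem_descentSet_iff hbπ]
    constructor
    · rintro ⟨i, hd, rfl⟩
      exact (hchar i).mp hd
    · intro hm
      have h1 := hS1 m hm
      have h2 := hSlt m hm
      refine ⟨⟨m - 1, by omega⟩, ?_, by simp [Nat.sub_add_cancel h1]⟩
      rw [hchar]
      simpa using (by rw [Nat.sub_add_cancel h1]; exact hm : m - 1 + 1 ∈ S)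
end

section
/- If a permutation of {1,...,n} (n >= 3) avoids a nonconsecutive 321 pattern and its first three entries form a 321 pattern (a_1 > a_2 > a_3), then a_2 = 2 and a_3 = 1. -/
/-- A permutation avoids a nonconsecutive 321 pattern if every occurrence of 321
(indices `i < j < k` with `π i > π j > π k`) occupies three consecutive positions. -/
def AvoidsNonconsec321 {n : ℕ} (π : Equiv.Perm (Fin n)) : Prop :=
  ∀ i j k : Fin n, i < j → j < k → π k < π j → π j < π i →
    (j : ℕ) = (i : ℕ) + 1 ∧ (k : ℕ) = (i : ℕ) + 2

/-- The permutation starts with three decreasing entries. -/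
def Dec3 {n : ℕ} (π : Equiv.Perm (Fin n)) : Prop :=
  ∃ h : 2 < n, π ⟨2, h⟩ < π ⟨1, by omega⟩ ∧ π ⟨1, by omega⟩ < π ⟨0, by omega⟩

/-- If a permutation of length `n ≥ 3` avoids a nonconsecutive 321 pattern and its first
three entries are decreasing, then the second entry is 2 and the third entry is 1
(entries regarded as the 1-indexed values `(π p : ℕ) + 1`). -/
theorem second_and_third_entries_of_dec3 (n : ℕ) (hn : 3 ≤ n)
    (π : Equiv.Perm (Fin n)) (hav : AvoidsNonconsec321 π)
    (hdec : π ⟨2, by omega⟩ < π ⟨1, by omega⟩ ∧ π ⟨1, by omega⟩ < π ⟨0, by omega⟩) :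
    (π ⟨1, by omega⟩ : ℕ) + 1 = 2 ∧ (π ⟨2, by omega⟩ : ℕ) + 1 = 1 := by
  obtain ⟨h21, h10⟩ := hdec
  set i0 : Fin n := ⟨0, by omega⟩
  set i1 : Fin n := ⟨1, by omega⟩
  set i2 : Fin n := ⟨2, by omega⟩
  -- step 1: π i2 = 0
  have hc0 : (π i2 : ℕ) = 0 := by
    by_contra hc
    -- position of value 0
    have h0lt : (0:ℕ) < (π i2 : ℕ) := Nat.pos_of_ne_zero hc
    set m : Fin n := π.symm ⟨0, by omega⟩
    have hm : π m = ⟨0, by omega⟩ := π.apply_symm_apply _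
    have hm0 : (π m : ℕ) < (π i2 : ℕ) := by rw [hm]; exact h0lt
    have hmne2 : m ≠ i2 := fun h => by rw [h] at hm0; omega
    have hmne1 : m ≠ i1 := fun h => by
      rw [h] at hm0
      have : (π i2 : ℕ) < (π i1 : ℕ) := h21
      omega
    have hmne0 : m ≠ i0 := fun h => by
      rw [h] at hm0
      have h1 : (π i2 : ℕ) < (π i1 : ℕ) := h21
      have h2 : (π i1 : ℕ) < (π i0 : ℕ) := h10
      omega
    have hmgt : i2 < m := by
      have : (m : ℕ) ≠ 0 := fun h => hmne0 (Fin.ext h)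
      have : (m : ℕ) ≠ 1 := fun h => hmne1 (Fin.ext h)
      have : (m : ℕ) ≠ 2 := fun h => hmne2 (Fin.ext h)
      have h0 : (m : ℕ) ≠ 0 := fun h => hmne0 (Fin.ext h)
      have h1 : (m : ℕ) ≠ 1 := fun h => hmne1 (Fin.ext h)
      have e2 : (i2 : ℕ) = 2 := rfl
      show (i2 : ℕ) < (m : ℕ)
      omega
    obtain ⟨-, hk⟩ := hav i0 i1 m (by exact Nat.zero_lt_one) (by
        have e1 : (i1 : ℕ) = 1 := rfl
        have e2 : (i2 : ℕ) = 2 := rfl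
        show (i1 : ℕ) < (m : ℕ); omega)
      (by show (π m : ℕ) < _; exact lt_trans hm0 h21) h10
    exact hmne2 (Fin.ext (by simpa [i0, i2] using hk))
  -- step 2: π i1 = 1
  have hb1 : (π i1 : ℕ) = 1 := by
    have hb0 : (0:ℕ) < (π i1 : ℕ) := by
      have : (π i2 : ℕ) < (π i1 : ℕ) := h21
      omega
    by_contra hb
    -- value 1 at position m
    set m : Fin n := π.symm ⟨1, by omega⟩
    have hm : π m = ⟨1, by omega⟩ := π.apply_symm_apply _
    have hm1 : (π m : ℕ) = 1 := by rw [hm]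
    have hmlt : (π m : ℕ) < (π i1 : ℕ) := by omega
    have hmne1 : m ≠ i1 := fun h => by rw [h] at hmlt; omega
    have hmne0 : m ≠ i0 := fun h => by
      have : (π i1 : ℕ) < (π i0 : ℕ) := h10
      rw [h] at hmlt; omega
    have hmne2 : m ≠ i2 := fun h => by rw [h] at hm1; omega
    have hmgt : (i1 : ℕ) < (m : ℕ) := by
      have h0 : (m : ℕ) ≠ 0 := fun h => hmne0 (Fin.ext h)
      have h1 : (m : ℕ) ≠ 1 := fun h => hmne1 (Fin.ext h)
      have h2 : (m : ℕ) ≠ 2 := fun h => hmne2 (Fin.ext h)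
      have e1 : (i1 : ℕ) = 1 := rfl
      show (i1 : ℕ) < (m : ℕ)
      omega
    obtain ⟨-, hk⟩ := hav i0 i1 m (by exact Nat.zero_lt_one) hmgt (by exact hmlt) h10
    exact hmne2 (Fin.ext (by simpa [i0, i2] using hk))
  exact ⟨by omega, by omega⟩
end

section
/- In a permutation avoiding a nonconsecutive 321 pattern, any two occurrences of the (consecutive) pattern 321 occupy disjoint sets of positions; in fact if a 321 occurrence starts at position k, the next occurrence starts at position at least k+3. -/
/-- A (consecutive) occurrence of 321 starting at 0-indexed position `p`. -/
def Occ321At {n : ℕ} (π : Equiv.Perm (Fin n)) (p : ℕ) : Prop :=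
  ∃ h : p + 2 < n,
    π ⟨p + 2, h⟩ < π ⟨p + 1, by omega⟩ ∧ π ⟨p + 1, by omega⟩ < π ⟨p, by omega⟩

/-- In a permutation avoiding a nonconsecutive 321 pattern, two occurrences of the
(consecutive) pattern 321 starting at positions `p < q` satisfy `q ≥ p + 3`; in
particular they occupy disjoint sets of positions. -/
theorem occurrences_disjoint (n : ℕ) (π : Equiv.Perm (Fin n))
    (hav : AvoidsNonconsec321 π) (p q : ℕ)
    (hp : Occ321At π p) (hq : Occ321At π q) (hpq : p < q) :
    p + 3 ≤ q := by
  by_contra h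
  obtain ⟨hpn, hp1, hp2⟩ := hp
  obtain ⟨hqn, hq1, hq2⟩ := hq
  have hub : q ≤ p + 2 := by omega
  have hn : p + 3 < n := by omega
  have key : π ⟨p + 3, by omega⟩ < π ⟨p + 1, by omega⟩ := by
    rcases (by omega : q = p + 1 ∨ q = p + 2) with rfl | rfl
    · exact lt_trans (by exact_mod_cast hq1) hp1
    · exact lt_trans (by exact_mod_cast hq2) hp1
  have := hav ⟨p, by omega⟩ ⟨p + 1, by omega⟩ ⟨p + 3, by omega⟩
    (by simp [Fin.lt_def]) (by simp [Fin.lt_def]) key hp2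
  simp at this
end

section
/- Let a_n be the number of permutations of {1,...,n} avoiding a nonconsecutive 321 pattern, b_n the number of those starting with three decreasing entries, and d_n = a_n - b_n. Then b_n = d_{n-2} for n >= 3. -/
set_option maxHeartbeats 1000000


/-- `a n`: the number of permutations of `{1,…,n}` avoiding a nonconsecutive 321 pattern. -/
noncomputable def a (n : ℕ) : ℕ :=
  Nat.card {π : Equiv.Perm (Fin n) // AvoidsNonconsec321 π}

/-- `b n`: those additionally starting with three decreasing entries. -/
noncomputable def b (n : ℕ) : ℕ :=
  Nat.card {π : Equiv.Perm (Fin n) // AvoidsNonconsec321 π ∧ Dec3 π}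


private lemma base_struct {m : ℕ} (hm : 1 ≤ m) (π : Equiv.Perm (Fin (m+2)))
    (hA : AvoidsNonconsec321 π) (hD : Dec3 π) :
    (π ⟨1, by omega⟩).val = 1 ∧ (π ⟨2, by omega⟩).val = 0 ∧
    (∀ k : Fin (m+2), k.val = 0 ∨ 3 ≤ k.val → 2 ≤ (π k).val) := by
  obtain ⟨h2, hd1, hd2⟩ := hD
  have hd1' : (π (⟨2, by omega⟩ : Fin (m+2))).val < (π ⟨1, by omega⟩).val := hd1
  have hd2' : (π (⟨1, by omega⟩ : Fin (m+2))).val < (π ⟨0, by omega⟩).val := hd2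
  have hC : ∀ k : Fin (m+2), (π k).val < (π ⟨1, by omega⟩).val → k.val = 2 := by
    intro k hk
    have hkl := k.isLt
    rcases Nat.lt_or_ge k.val 3 with h3 | h3
    · have hk1 : k.val ≠ 1 := by
        intro h
        have h' : (π k).val = (π (⟨1, by omega⟩ : Fin (m+2))).val :=
          congrArg (fun x => (π x).val) (Fin.ext h)
        omega
      have hk0 : k.val ≠ 0 := by
        intro h
        have h' : (π k).val = (π (⟨0, by omega⟩ : Fin (m+2))).val :=
          congrArg (fun x => (π x).val) (Fin.ext h)
        omega
      omega
    · have hres : (1 : ℕ) = (0 : ℕ) + 1 ∧ (k : ℕ) = (0 : ℕ) + 2 :=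
        hA ⟨0, by omega⟩ ⟨1, by omega⟩ k
          (Fin.mk_lt_mk.mpr (by omega)) (by rw [Fin.lt_def]; exact (by omega : 1 < k.val))
          (by rw [Fin.lt_def]; exact hk) hd2
      omega
  have h20 : (π ⟨2, by omega⟩).val = 0 := by
    obtain ⟨k, hπk⟩ : ∃ k, π k = ⟨0, by omega⟩ := ⟨π.symm _, π.apply_symm_apply _⟩
    have hπk' : (π k).val = 0 := congrArg Fin.val hπk
    have hk2 : k.val = 2 := hC k (by omega)
    have h' : (π (⟨2, by omega⟩ : Fin (m+2))).val = (π k).val :=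
      congrArg (fun x => (π x).val) (Fin.ext hk2.symm)
    omega
  have h11 : (π ⟨1, by omega⟩).val = 1 := by
    by_contra h
    obtain ⟨k, hπk⟩ : ∃ k, π k = ⟨1, by omega⟩ := ⟨π.symm _, π.apply_symm_apply _⟩
    have hπk' : (π k).val = 1 := congrArg Fin.val hπk
    have hk2 : k.val = 2 := hC k (by omega)
    have h' : (π (⟨2, by omega⟩ : Fin (m+2))).val = (π k).val :=
      congrArg (fun x => (π x).val) (Fin.ext hk2.symm)
    omega
  refine ⟨h11, h20, ?_⟩
  intro k hk
  rcases hk with hk | hk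
  · have h' : (π (⟨0, by omega⟩ : Fin (m+2))).val = (π k).val :=
      congrArg (fun x => (π x).val) (Fin.ext hk.symm)
    omega
  · have hlt : ¬ (π k).val < (π (⟨1, by omega⟩ : Fin (m+2))).val := by
      intro h
      have := hC k h
      omega
    have hne : (π k).val ≠ (π (⟨1, by omega⟩ : Fin (m+2))).val := by
      intro h
      have h' : k.val = 1 := congrArg Fin.val (π.injective (Fin.ext h))
      omega
    omega

private def posEmb {m : ℕ} (i : Fin m) : Fin (m+2) :=
  if h : i.val = 0 then ⟨0, by omega⟩ else ⟨i.val + 2, by have := i.isLt; omega⟩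

private lemma posEmb_val {m : ℕ} (i : Fin m) :
    (posEmb i).val = if i.val = 0 then 0 else i.val + 2 := by
  unfold posEmb
  split <;> simp_all

private lemma posEmb_cases {m : ℕ} (i : Fin m) :
    (posEmb i).val = 0 ∨ 3 ≤ (posEmb i).val := by
  rw [posEmb_val]; split <;> omega

private lemma posEmb_lt {m : ℕ} {i j : Fin m} (h : i < j) : posEmb i < posEmb j := by
  rw [Fin.lt_def] at h ⊢
  rw [posEmb_val, posEmb_val]
  split_ifs <;> omega

private lemma posEmb_inj {m : ℕ} : Function.Injective (posEmb (m := m)) := by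
  intro i j h
  have h' := congrArg Fin.val h
  rw [posEmb_val, posEmb_val] at h'
  apply Fin.ext
  split_ifs at h' <;> omega

private def fwdFun {m : ℕ} (π : Equiv.Perm (Fin (m+2))) (i : Fin m) : Fin m :=
  ⟨(π (posEmb i)).val - 2, by have := (π (posEmb i)).isLt; have := i.isLt; omega⟩

private lemma fwd_bij {m : ℕ} (hm : 1 ≤ m) (π : Equiv.Perm (Fin (m+2)))
    (hA : AvoidsNonconsec321 π) (hD : Dec3 π) : Function.Bijective (fwdFun π) := by
  apply Finite.injective_iff_bijective.mp
  intro i j h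
  have h' : (π (posEmb i)).val - 2 = (π (posEmb j)).val - 2 := congrArg Fin.val h
  have h2i := (base_struct hm π hA hD).2.2 (posEmb i) (posEmb_cases i)
  have h2j := (base_struct hm π hA hD).2.2 (posEmb j) (posEmb_cases j)
  exact posEmb_inj (π.injective (Fin.ext (by omega)))

private noncomputable def fwd {m : ℕ} (hm : 1 ≤ m) (π : Equiv.Perm (Fin (m+2)))
    (hA : AvoidsNonconsec321 π) (hD : Dec3 π) : Equiv.Perm (Fin m) :=
  Equiv.ofBijective (fwdFun π) (fwd_bij hm π hA hD)

private lemma fwd_val {m : ℕ} (hm : 1 ≤ m) (π : Equiv.Perm (Fin (m+2)))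
    (hA : AvoidsNonconsec321 π) (hD : Dec3 π) (i : Fin m) :
    (fwd hm π hA hD i).val = (π (posEmb i)).val - 2 := rfl

private lemma fwd_avoids {m : ℕ} (hm : 1 ≤ m) (π : Equiv.Perm (Fin (m+2)))
    (hA : AvoidsNonconsec321 π) (hD : Dec3 π) :
    AvoidsNonconsec321 (fwd hm π hA hD) := by
  intro i j k hij hjk h1 h2
  rw [Fin.lt_def, fwd_val, fwd_val] at h1 h2
  have v1 := (base_struct hm π hA hD).2.2 (posEmb i) (posEmb_cases i)
  have v2 := (base_struct hm π hA hD).2.2 (posEmb j) (posEmb_cases j)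
  have v3 := (base_struct hm π hA hD).2.2 (posEmb k) (posEmb_cases k)
  have hcon : ((posEmb j : Fin (m+2)) : ℕ) = ((posEmb i : Fin (m+2)) : ℕ) + 1 ∧
      ((posEmb k : Fin (m+2)) : ℕ) = ((posEmb i : Fin (m+2)) : ℕ) + 2 :=
    hA (posEmb i) (posEmb j) (posEmb k) (posEmb_lt hij) (posEmb_lt hjk)
      (by rw [Fin.lt_def]; omega) (by rw [Fin.lt_def]; omega)
  obtain ⟨hc1, hc2⟩ := hcon
  rw [posEmb_val, posEmb_val] at hc1
  rw [posEmb_val, posEmb_val] at hc2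
  have hij' : i.val < j.val := hij
  have hjk' : j.val < k.val := hjk
  split_ifs at hc1 hc2 <;> omega

private lemma fwd_no_desc {m : ℕ} (hm : 1 ≤ m) (π : Equiv.Perm (Fin (m+2)))
    (hA : AvoidsNonconsec321 π) (hD : Dec3 π) (hm2 : 2 < m)
    (hb1 : (fwd hm π hA hD) ⟨2, hm2⟩ < (fwd hm π hA hD) ⟨1, by omega⟩)
    (hb2 : (fwd hm π hA hD) ⟨1, by omega⟩ < (fwd hm π hA hD) ⟨0, by omega⟩) : False := by
  have hb1' : (π (⟨4, by omega⟩ : Fin (m+2))).val - 2 <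
      (π (⟨3, by omega⟩ : Fin (m+2))).val - 2 := hb1
  have hb2' : (π (⟨3, by omega⟩ : Fin (m+2))).val - 2 <
      (π (⟨0, by omega⟩ : Fin (m+2))).val - 2 := hb2
  have e2 : posEmb (⟨2, hm2⟩ : Fin m) = ⟨4, by omega⟩ := rfl
  have e1 : posEmb (⟨1, by omega⟩ : Fin m) = ⟨3, by omega⟩ := rfl
  have v4 : 2 ≤ (π (⟨4, by omega⟩ : Fin (m+2))).val := by
    have h := (base_struct hm π hA hD).2.2 (posEmb (⟨2, hm2⟩ : Fin m)) (posEmb_cases _)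
    rwa [e2] at h
  have v3 : 2 ≤ (π (⟨3, by omega⟩ : Fin (m+2))).val := by
    have h := (base_struct hm π hA hD).2.2 (posEmb (⟨1, by omega⟩ : Fin m)) (posEmb_cases _)
    rwa [e1] at h
  have hlt1 : (π (⟨4, by omega⟩ : Fin (m+2))).val < (π (⟨3, by omega⟩ : Fin (m+2))).val := by
    omega
  have hlt2 : (π (⟨3, by omega⟩ : Fin (m+2))).val < (π (⟨0, by omega⟩ : Fin (m+2))).val := by
    omega
  have hcon : (3 : ℕ) = (0 : ℕ) + 1 ∧ (4 : ℕ) = (0 : ℕ) + 2 :=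
    hA ⟨0, by omega⟩ ⟨3, by omega⟩ ⟨4, by omega⟩
      (Fin.mk_lt_mk.mpr (by omega)) (Fin.mk_lt_mk.mpr (by omega)) hlt1 hlt2
  omega

private lemma fwd_not_dec3 {m : ℕ} (hm : 1 ≤ m) (π : Equiv.Perm (Fin (m+2)))
    (hA : AvoidsNonconsec321 π) (hD : Dec3 π) : ¬ Dec3 (fwd hm π hA hD) :=
  fun h => match h with
  | ⟨hm2, hb1, hb2⟩ => fwd_no_desc hm π hA hD hm2 hb1 hb2
private lemma card_le_fwd (m : ℕ) (hm : 1 ≤ m) :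
    Nat.card {π : Equiv.Perm (Fin (m+2)) // AvoidsNonconsec321 π ∧ Dec3 π} ≤
    Nat.card {σ : Equiv.Perm (Fin m) // AvoidsNonconsec321 σ ∧ ¬ Dec3 σ} := by
  apply Nat.card_le_card_of_injective
    (fun x : {π : Equiv.Perm (Fin (m+2)) // AvoidsNonconsec321 π ∧ Dec3 π} =>
      (⟨fwd hm x.1 x.2.1 x.2.2, fwd_avoids hm x.1 x.2.1 x.2.2,
        fwd_not_dec3 hm x.1 x.2.1 x.2.2⟩ :
        {σ : Equiv.Perm (Fin m) // AvoidsNonconsec321 σ ∧ ¬ Dec3 σ}))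
  rintro ⟨π, hAπ, hDπ⟩ ⟨ρ, hAρ, hDρ⟩ h
  have hfun : ∀ i : Fin m, (fwd hm π hAπ hDπ i).val = (fwd hm ρ hAρ hDρ i).val := by
    intro i
    have h' : fwd hm π hAπ hDπ = fwd hm ρ hAρ hDρ := congrArg Subtype.val h
    rw [h']
  have hpt : ∀ i : Fin m, (π (posEmb i)).val = (ρ (posEmb i)).val := by
    intro i
    have h1 := hfun i
    rw [fwd_val, fwd_val] at h1
    have := (base_struct hm π hAπ hDπ).2.2 (posEmb i) (posEmb_cases i)
    have := (base_struct hm ρ hAρ hDρ).2.2 (posEmb i) (posEmb_cases i)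
    omega
  have hππ := base_struct hm π hAπ hDπ
  have hρρ := base_struct hm ρ hAρ hDρ
  apply Subtype.ext
  apply Equiv.ext
  intro k
  apply Fin.ext
  have hkl := k.isLt
  rcases Nat.lt_or_ge k.val 3 with h3 | h3
  · rcases (by omega : k.val = 0 ∨ k.val = 1 ∨ k.val = 2) with h | h | h
    · have hk : k = posEmb (⟨0, by omega⟩ : Fin m) := by
        apply Fin.ext; rw [posEmb_val]; simpa using h
      rw [hk]; exact hpt _
    · have hk1 : k = ⟨1, by omega⟩ := Fin.ext h
      rw [hk1]; rw [hππ.1, hρρ.1]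
    · have hk2 : k = ⟨2, by omega⟩ := Fin.ext h
      rw [hk2]; rw [hππ.2.1, hρρ.2.1]
  · have hk : k = posEmb (⟨k.val - 2, by omega⟩ : Fin m) := by
      have h2 : ((⟨k.val - 2, by omega⟩ : Fin m) : ℕ) = k.val - 2 := rfl
      apply Fin.ext
      rw [posEmb_val, h2, if_neg (by omega)]
      omega
    rw [hk]; exact hpt _

private def gVal {m : ℕ} (hm : 0 < m) (σ : Equiv.Perm (Fin m)) (k : Fin (m+2)) : ℕ :=
  if k.val = 0 then (σ ⟨0, hm⟩).val + 2
  else if k.val = 1 then 1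
  else if k.val = 2 then 0
  else (σ ⟨k.val - 2, by have := k.isLt; omega⟩).val + 2

private lemma gVal_lt {m : ℕ} (hm : 0 < m) (σ : Equiv.Perm (Fin m)) (k : Fin (m+2)) :
    gVal hm σ k < m + 2 := by
  unfold gVal
  have h1 := (σ ⟨0, hm⟩).isLt
  have h2 := (σ ⟨k.val - 2, by have := k.isLt; omega⟩).isLt
  split_ifs <;> omega

private def gFun {m : ℕ} (hm : 0 < m) (σ : Equiv.Perm (Fin m)) (k : Fin (m+2)) : Fin (m+2) :=
  ⟨gVal hm σ k, gVal_lt hm σ k⟩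

private lemma gVal_zero {m : ℕ} (hm : 0 < m) (σ : Equiv.Perm (Fin m)) (k : Fin (m+2))
    (h : k.val = 0) : gVal hm σ k = (σ ⟨0, hm⟩).val + 2 := by
  unfold gVal; rw [if_pos h]

private lemma gVal_one {m : ℕ} (hm : 0 < m) (σ : Equiv.Perm (Fin m)) (k : Fin (m+2))
    (h : k.val = 1) : gVal hm σ k = 1 := by
  unfold gVal; rw [if_neg (by omega), if_pos h]

private lemma gVal_two {m : ℕ} (hm : 0 < m) (σ : Equiv.Perm (Fin m)) (k : Fin (m+2))
    (h : k.val = 2) : gVal hm σ k = 0 := by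
  unfold gVal; rw [if_neg (by omega), if_neg (by omega), if_pos h]

private lemma gVal_big {m : ℕ} (hm : 0 < m) (σ : Equiv.Perm (Fin m)) (k : Fin (m+2))
    (h : 3 ≤ k.val) :
    gVal hm σ k = (σ ⟨k.val - 2, by have := k.isLt; omega⟩).val + 2 := by
  unfold gVal; rw [if_neg (by omega), if_neg (by omega), if_neg (by omega)]

private lemma sigma_cancel {m : ℕ} (σ : Equiv.Perm (Fin m)) {i j : Fin m}
    (h : (σ i).val + 2 = (σ j).val + 2) : i.val = j.val :=
  congrArg Fin.val (σ.injective (Fin.ext (by omega)))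

private lemma gVal_posEmb {m : ℕ} (hm : 0 < m) (σ : Equiv.Perm (Fin m)) (i : Fin m) :
    gVal hm σ (posEmb i) = (σ i).val + 2 := by
  rcases eq_or_ne i.val 0 with h | h
  · have e : posEmb i = ⟨0, by omega⟩ := Fin.ext (by rw [posEmb_val, if_pos h])
    rw [e, gVal_zero hm σ _ rfl]
    have e2 : i = ⟨0, hm⟩ := Fin.ext h
    rw [e2]
  · have h3 : 3 ≤ (posEmb i).val := by rw [posEmb_val, if_neg h]; omega
    rw [gVal_big hm σ _ h3]
    have e2 : ∀ p : (posEmb i).val - 2 < m, (⟨(posEmb i).val - 2, p⟩ : Fin m) = i :=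
      fun p => Fin.ext (by show (posEmb i).val - 2 = i.val; rw [posEmb_val, if_neg h]; omega)
    rw [e2]

private lemma gFun_inj {m : ℕ} (hm : 0 < m) (σ : Equiv.Perm (Fin m)) :
    Function.Injective (gFun hm σ) := by
  intro k1 k2 h
  have hv : gVal hm σ k1 = gVal hm σ k2 := congrArg Fin.val h
  have l1 := k1.isLt
  have l2 := k2.isLt
  apply Fin.ext
  rcases (by omega : k1.val = 0 ∨ k1.val = 1 ∨ k1.val = 2 ∨ 3 ≤ k1.val) with a | a | a | a <;>
    rcases (by omega : k2.val = 0 ∨ k2.val = 1 ∨ k2.val = 2 ∨ 3 ≤ k2.val) with b | b | b | b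
  · omega
  · rw [gVal_zero hm σ k1 a, gVal_one hm σ k2 b] at hv; omega
  · rw [gVal_zero hm σ k1 a, gVal_two hm σ k2 b] at hv; omega
  · rw [gVal_zero hm σ k1 a, gVal_big hm σ k2 b] at hv
    have e : (0 : ℕ) = k2.val - 2 := sigma_cancel σ hv
    omega
  · rw [gVal_one hm σ k1 a, gVal_zero hm σ k2 b] at hv; omega
  · omega
  · rw [gVal_one hm σ k1 a, gVal_two hm σ k2 b] at hv; omega
  · rw [gVal_one hm σ k1 a, gVal_big hm σ k2 b] at hv; omega
  · rw [gVal_two hm σ k1 a, gVal_zero hm σ k2 b] at hv; omega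
  · rw [gVal_two hm σ k1 a, gVal_one hm σ k2 b] at hv; omega
  · omega
  · rw [gVal_two hm σ k1 a, gVal_big hm σ k2 b] at hv; omega
  · rw [gVal_big hm σ k1 a, gVal_zero hm σ k2 b] at hv
    have e : k1.val - 2 = (0 : ℕ) := sigma_cancel σ hv
    omega
  · rw [gVal_big hm σ k1 a, gVal_one hm σ k2 b] at hv; omega
  · rw [gVal_big hm σ k1 a, gVal_two hm σ k2 b] at hv; omega
  · rw [gVal_big hm σ k1 a, gVal_big hm σ k2 b] at hv
    have e : k1.val - 2 = k2.val - 2 := sigma_cancel σ hv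
    omega

private noncomputable def bwd {m : ℕ} (hm : 0 < m) (σ : Equiv.Perm (Fin m)) :
    Equiv.Perm (Fin (m+2)) :=
  Equiv.ofBijective (gFun hm σ) (Finite.injective_iff_bijective.mp (gFun_inj hm σ))

private lemma bwd_val {m : ℕ} (hm : 0 < m) (σ : Equiv.Perm (Fin m)) (k : Fin (m+2)) :
    (bwd hm σ k).val = gVal hm σ k := rfl

private lemma g_avoids_core {m : ℕ} (hm : 0 < m) (σ : Equiv.Perm (Fin m))
    (hA' : AvoidsNonconsec321 σ) (hnd : ¬ Dec3 σ) (i j k : Fin (m+2))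
    (hij : i.val < j.val) (hjk : j.val < k.val)
    (h1 : gVal hm σ k < gVal hm σ j) (h2 : gVal hm σ j < gVal hm σ i) :
    j.val = i.val + 1 ∧ k.val = i.val + 2 := by
  have li := i.isLt
  have lj := j.isLt
  have lk := k.isLt
  rcases (by omega : k.val = 2 ∨ 3 ≤ k.val) with hk | hk
  · omega
  rw [gVal_big hm σ k hk] at h1
  rcases (by omega : j.val = 1 ∨ j.val = 2 ∨ 3 ≤ j.val) with hj | hj | hj
  · rw [gVal_one hm σ j hj] at h1; omega
  · rw [gVal_two hm σ j hj] at h1; omega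
  rw [gVal_big hm σ j hj] at h1 h2
  rcases (by omega : i.val = 0 ∨ i.val = 1 ∨ i.val = 2 ∨ 3 ≤ i.val) with hi | hi | hi | hi
  · rw [gVal_zero hm σ i hi] at h2
    have hσ1 : (σ (⟨k.val - 2, by omega⟩ : Fin m)).val <
        (σ (⟨j.val - 2, by omega⟩ : Fin m)).val := by omega
    have hσ2 : (σ (⟨j.val - 2, by omega⟩ : Fin m)).val < (σ (⟨0, hm⟩ : Fin m)).val := by omega
    have hc := hA' ⟨0, hm⟩ ⟨j.val - 2, by omega⟩ ⟨k.val - 2, by omega⟩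
      (Fin.mk_lt_mk.mpr (by omega)) (Fin.mk_lt_mk.mpr (by omega)) hσ1 hσ2
    have c1 : j.val - 2 = 0 + 1 := hc.1
    have c2 : k.val - 2 = 0 + 2 := hc.2
    exfalso
    apply hnd
    have ea : (σ (⟨k.val - 2, by omega⟩ : Fin m)).val = (σ (⟨2, by omega⟩ : Fin m)).val :=
      congrArg (fun t => (σ t).val) (Fin.ext (by omega : k.val - 2 = 2))
    have eb : (σ (⟨j.val - 2, by omega⟩ : Fin m)).val = (σ (⟨1, by omega⟩ : Fin m)).val :=
      congrArg (fun t => (σ t).val) (Fin.ext (by omega : j.val - 2 = 1))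
    have hτ1 : (σ (⟨2, by omega⟩ : Fin m)).val < (σ (⟨1, by omega⟩ : Fin m)).val := by omega
    have hτ2 : (σ (⟨1, by omega⟩ : Fin m)).val < (σ (⟨0, by omega⟩ : Fin m)).val := by omega
    exact ⟨by omega, hτ1, hτ2⟩
  · rw [gVal_one hm σ i hi] at h2; omega
  · rw [gVal_two hm σ i hi] at h2; omega
  · rw [gVal_big hm σ i hi] at h2
    have hσ1 : (σ (⟨k.val - 2, by omega⟩ : Fin m)).val <
        (σ (⟨j.val - 2, by omega⟩ : Fin m)).val := by omega
    have hσ2 : (σ (⟨j.val - 2, by omega⟩ : Fin m)).val <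
        (σ (⟨i.val - 2, by omega⟩ : Fin m)).val := by omega
    have hc := hA' ⟨i.val - 2, by omega⟩ ⟨j.val - 2, by omega⟩ ⟨k.val - 2, by omega⟩
      (Fin.mk_lt_mk.mpr (by omega)) (Fin.mk_lt_mk.mpr (by omega)) hσ1 hσ2
    have c1 : j.val - 2 = (i.val - 2) + 1 := hc.1
    have c2 : k.val - 2 = (i.val - 2) + 2 := hc.2
    omega

private lemma bwd_avoids {m : ℕ} (hm : 0 < m) (σ : Equiv.Perm (Fin m))
    (hA' : AvoidsNonconsec321 σ) (hnd : ¬ Dec3 σ) :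
    AvoidsNonconsec321 (bwd hm σ) := by
  intro i j k hij hjk h1 h2
  have h1' := Fin.lt_def.mp h1
  have h2' := Fin.lt_def.mp h2
  rw [bwd_val, bwd_val] at h1'
  rw [bwd_val, bwd_val] at h2'
  exact g_avoids_core hm σ hA' hnd i j k hij hjk h1' h2'

private lemma bwd_dec3 {m : ℕ} (hm : 0 < m) (σ : Equiv.Perm (Fin m)) :
    Dec3 (bwd hm σ) :=
  ⟨by omega, (by omega : (0:ℕ) < 1), (by omega : (1:ℕ) < (σ ⟨0, hm⟩).val + 2)⟩

private lemma card_le_bwd (m : ℕ) (hm : 1 ≤ m) :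
    Nat.card {σ : Equiv.Perm (Fin m) // AvoidsNonconsec321 σ ∧ ¬ Dec3 σ} ≤
    Nat.card {π : Equiv.Perm (Fin (m+2)) // AvoidsNonconsec321 π ∧ Dec3 π} := by
  apply Nat.card_le_card_of_injective
    (fun x : {σ : Equiv.Perm (Fin m) // AvoidsNonconsec321 σ ∧ ¬ Dec3 σ} =>
      (⟨bwd hm x.1, bwd_avoids hm x.1 x.2.1 x.2.2, bwd_dec3 hm x.1⟩ :
        {π : Equiv.Perm (Fin (m+2)) // AvoidsNonconsec321 π ∧ Dec3 π}))
  rintro ⟨σ, hA1, hD1⟩ ⟨σ', hA2, hD2⟩ h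
  have h' : bwd hm σ = bwd hm σ' := congrArg Subtype.val h
  apply Subtype.ext
  show σ = σ'
  apply Equiv.ext
  intro i
  apply Fin.ext
  have e1 : gVal hm σ (posEmb i) = gVal hm σ' (posEmb i) :=
    congrArg (fun ρ => (ρ (posEmb i)).val) h'
  rw [gVal_posEmb, gVal_posEmb] at e1
  omega

private lemma card_split (m : ℕ) :
    Nat.card {π : Equiv.Perm (Fin m) // AvoidsNonconsec321 π} =
    Nat.card {π : Equiv.Perm (Fin m) // AvoidsNonconsec321 π ∧ Dec3 π} +
    Nat.card {π : Equiv.Perm (Fin m) // AvoidsNonconsec321 π ∧ ¬ Dec3 π} := by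
  classical
  calc Nat.card {π : Equiv.Perm (Fin m) // AvoidsNonconsec321 π}
      = Nat.card ({x : {π : Equiv.Perm (Fin m) // AvoidsNonconsec321 π} // Dec3 x.1} ⊕
          {x : {π : Equiv.Perm (Fin m) // AvoidsNonconsec321 π} // ¬ Dec3 x.1}) :=
        Nat.card_congr (Equiv.sumCompl
          (fun x : {π : Equiv.Perm (Fin m) // AvoidsNonconsec321 π} => Dec3 x.1)).symm
    _ = Nat.card {x : {π : Equiv.Perm (Fin m) // AvoidsNonconsec321 π} // Dec3 x.1} +
        Nat.card {x : {π : Equiv.Perm (Fin m) // AvoidsNonconsec321 π} // ¬ Dec3 x.1} :=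
        Nat.card_sum
    _ = _ := by
        rw [Nat.card_congr (Equiv.subtypeSubtypeEquivSubtypeInter
            (fun π : Equiv.Perm (Fin m) => AvoidsNonconsec321 π) (fun π => Dec3 π)),
          Nat.card_congr (Equiv.subtypeSubtypeEquivSubtypeInter
            (fun π : Equiv.Perm (Fin m) => AvoidsNonconsec321 π) (fun π => ¬ Dec3 π))]



/-- With `d n = a n - b n`, one has `b n = d (n-2)` for `n ≥ 3`. -/
theorem b_eq_d_sub_two (n : ℕ) (hn : 3 ≤ n) :
    b n = a (n - 2) - b (n - 2) := by
  obtain ⟨m, rfl⟩ : ∃ m, n = m + 2 := ⟨n - 2, by omega⟩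
  have hm : 1 ≤ m := by omega
  have hsimp : m + 2 - 2 = m := by omega
  rw [hsimp]
  have hiso : b (m + 2) =
      Nat.card {σ : Equiv.Perm (Fin m) // AvoidsNonconsec321 σ ∧ ¬ Dec3 σ} :=
    le_antisymm (card_le_fwd m hm) (card_le_bwd m hm)
  have hsplit := card_split m
  unfold a b at *
  omega
end

section
/- The formal power series identity sum_{n>=0} (sum_{k=0}^{floor(n/3)} binomial(n-2k,k) C_{n-2k}) x^n = C(x + x^3) holds, where C(x) = sum_{m>=0} C_m x^m is the Catalan number generating function and C(x+x^3) denotes composition of formal power series. -/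
open PowerSeries

/-!
By the binomial theorem `(X + X³)ᵐ = ∑ₖ (m choose k) X^(m + 2k)`, so the coefficient of `xⁿ`
in `C(X + X³)` collects `Cₘ (m choose k)` over the pairs `k ≤ m` with `m + 2k = n`. These pairs
are exactly `(n - 2k, k)` with `3k ≤ n`.
-/

/-- The composition `C(X + X³)` of the Catalan generating function with `X + X³`,
defined coefficientwise: since `X + X³` has zero constant term, the coefficient of `xⁿ`
in `C(X + X³) = ∑_m C_m (X + X³)^m` only involves terms with `m ≤ n`. -/
noncomputable def catalanCompXaddX3 : PowerSeries ℚ :=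
  PowerSeries.mk fun n =>
    PowerSeries.coeff n
      (∑ m ∈ Finset.range (n + 1), (catalan m : ℚ) • (X + X ^ 3 : PowerSeries ℚ) ^ m)

open Finset

theorem coeff_X_add_X_pow_three_pow {R : Type*} [CommSemiring R] (n m : ℕ) :
    coeff n ((X + X ^ 3 : R⟦X⟧) ^ m)
      = ∑ k ∈ range (m + 1), if n = m + 2 * k then (m.choose k : R) else 0 := by
  rw [add_comm, add_pow, map_sum]
  refine sum_congr rfl fun k hk => ?_
  have hkm : 3 * k + (m - k) = m + 2 * k := by grind
  rw [← pow_mul, mul_comm, ← pow_add, hkm, ← map_natCast C, coeff_C_mul_X_pow]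

theorem sum_range_sum_range_ite_eq_add_two_mul {M : Type*} [AddCommMonoid M] (n : ℕ)
    (f : ℕ → ℕ → M) :
    ∑ m ∈ range (n + 1), ∑ k ∈ range (m + 1), (if n = m + 2 * k then f m k else 0)
      = ∑ k ∈ range (n / 3 + 1), f (n - 2 * k) k := by
  rw [sum_sigma', ← sum_filter]
  refine sum_nbij' (fun p => p.2) (fun k => ⟨n - 2 * k, k⟩) ?_ ?_ ?_ (fun _ _ => rfl) ?_ <;>
    simp only [Sigma.forall, mem_filter, mem_sigma, mem_range, Sigma.ext_iff, heq_eq_eq, and_true]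
  · omega
  · omega
  · omega
  · rintro m k ⟨-, rfl⟩
    rw [Nat.add_sub_cancel]

/-- `∑_{n≥0} (∑_{k=0}^{⌊n/3⌋} binomial(n-2k,k) C_{n-2k}) xⁿ = C(x + x³)`. -/
theorem genfun_sum_eq_catalan_comp :
    (PowerSeries.mk fun n =>
        ((∑ k ∈ Finset.range (n / 3 + 1),
          Nat.choose (n - 2 * k) k * catalan (n - 2 * k) : ℕ) : ℚ))
      = catalanCompXaddX3 := by
  ext n
  simp only [catalanCompXaddX3, coeff_mk, map_sum, map_smul, smul_eq_mul,
    coeff_X_add_X_pow_three_pow, mul_sum, mul_ite, mul_zero]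
  rw [sum_range_sum_range_ite_eq_add_two_mul]
  push_cast
  exact sum_congr rfl fun k _ => mul_comm _ _
end

section
/- The generating function F(x) = sum_{n>=0} e_n x^n, where e_n is the number of permutations of {1,...,n} avoiding a nonconsecutive 132 pattern, satisfies (x+x^3) F(x)^2 - F(x) + 1 = 0. -/
/-- A permutation avoids a nonconsecutive 132 pattern if every occurrence of 132
(indices `i < j < k` with `π i < π k < π j`) occupies three consecutive positions. -/
def AvoidsNonconsec132 {n : ℕ} (π : Equiv.Perm (Fin n)) : Prop :=
  ∀ i j k : Fin n, i < j → j < k → π i < π k → π k < π j →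
    (j : ℕ) = (i : ℕ) + 1 ∧ (k : ℕ) = (i : ℕ) + 2

/-- A (consecutive) occurrence of 132 starting at 0-indexed position `p`. -/
def Occ132At {n : ℕ} (π : Equiv.Perm (Fin n)) (p : ℕ) : Prop :=
  ∃ h : p + 2 < n,
    π ⟨p, by omega⟩ < π ⟨p + 2, h⟩ ∧ π ⟨p + 2, h⟩ < π ⟨p + 1, by omega⟩

/-- `e n`: the number of permutations of `{1,…,n}` avoiding a nonconsecutive 132 pattern. -/
noncomputable def e (n : ℕ) : ℕ :=
  Nat.card {π : Equiv.Perm (Fin n) // AvoidsNonconsec132 π}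

/-!
Let `π` avoid nonconsecutive 132, with its maximum at position `p`. For `i < p < k` with
`π i < π k` the triple `(i, p, k)` is a 132, hence consecutive: `i = p - 1` and `k = p + 1`.
So either every entry before the maximum exceeds every entry after it, and `π` is a block `α`
lying above a block `β` of the `b` smallest values, separated by the maximum (`skewWithMax`);
or the only exception is `π (p - 1) < π (p + 1)`, which forces
`π = α + (b + 2), b, max, b + 1, β` (`skewWith132`). Conversely, gluing any two avoiders in
either way gives an avoider. Hence `e (m + 1) = ∑ e_p e_{m-p} + ∑ e_p e_{m-2-p}`, that is,
`F = 1 + x F² + x³ F²`.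
-/

open Finset Function Equiv

lemma Nat.card_subtype_eq_card_and_add_card_and_not {α : Type*} [Finite α] (P Q : α → Prop) :
    Nat.card {x // P x} = Nat.card {x // P x ∧ Q x} + Nat.card {x // P x ∧ ¬ Q x} := by
  classical
  have := Fintype.ofFinite α
  simp only [Nat.card_eq_fintype_card, Fintype.card_subtype, ← filter_filter]
  exact (card_filter_add_card_filter_not Q).symm

lemma Nat.card_subtype_eq_sum_card_fiberwise {α : Type*} [Finite α] {P : α → Prop} {f : α → ℕ}
    {t : Finset ℕ} (hf : ∀ x, P x → f x ∈ t) :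
    Nat.card {x // P x} = ∑ p ∈ t, Nat.card {x // P x ∧ f x = p} := by
  classical
  have := Fintype.ofFinite α
  simp only [Nat.card_eq_fintype_card, Fintype.card_subtype, ← filter_filter]
  exact card_eq_sum_card_fiberwise fun x hx => hf x (mem_filter.1 hx).2

namespace Fin

variable {a b : ℕ}

lemma eq_left_or_eq_or_eq_right (i : Fin (a + b + 1)) :
    (∃ x : Fin a, i = ⟨x, by omega⟩) ∨ i = ⟨a, by omega⟩ ∨
      ∃ y : Fin b, i = ⟨a + 1 + y, by omega⟩ := by
  obtain h | h | h := lt_trichotomy (i : ℕ) a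
  · exact Or.inl ⟨⟨i, h⟩, rfl⟩
  · exact Or.inr (Or.inl (Fin.ext h))
  · exact Or.inr (Or.inr ⟨⟨i - (a + 1), by omega⟩, Fin.ext (by simp; omega)⟩)

lemma eq_left_or_eq_or_eq_or_eq_or_eq_right (i : Fin (a + b + 3)) :
    (∃ x : Fin a, i = ⟨x, by omega⟩) ∨ i = ⟨a, by omega⟩ ∨ i = ⟨a + 1, by omega⟩ ∨
      i = ⟨a + 2, by omega⟩ ∨ ∃ y : Fin b, i = ⟨a + 3 + y, by omega⟩ := by
  obtain h | h | h | h | h : (i : ℕ) < a ∨ (i : ℕ) = a ∨ (i : ℕ) = a + 1 ∨ (i : ℕ) = a + 2 ∨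
    a + 2 < (i : ℕ) := by omega
  · exact Or.inl ⟨⟨i, h⟩, rfl⟩
  · exact Or.inr (Or.inl (Fin.ext h))
  · exact Or.inr (Or.inr (Or.inl (Fin.ext h)))
  · exact Or.inr (Or.inr (Or.inr (Or.inl (Fin.ext h))))
  · exact Or.inr (Or.inr (Or.inr (Or.inr ⟨⟨i - (a + 3), by omega⟩, Fin.ext (by simp; omega)⟩)))

end Fin

namespace Equiv.Perm

section Values

variable {n : ℕ}

noncomputable def ofVal (f : Fin n → ℕ) (hf : ∀ i, f i < n) (hinj : Injective f) :
    Perm (Fin n) :=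
  ofBijective (fun i => ⟨f i, hf i⟩)
    (Finite.injective_iff_bijective.1 fun _ _ h => hinj (Fin.val_eq_of_eq h))

lemma val_apply_eq_card (π : Perm (Fin n)) (x : Fin n) : (π x : ℕ) = #{y | π y < π x} := by
  rw [← Fin.card_Iio (π x), ← card_image_of_injective {y | π y < π x} π.injective]
  congr 1
  ext v
  simp only [mem_image, mem_filter, mem_univ, true_and, mem_Iio]
  exact ⟨fun hv => ⟨π.symm v, by simpa using hv, by simp⟩, fun ⟨y, hy, hv⟩ => hv ▸ hy⟩

lemma val_apply_lt_card_iff {π : Perm (Fin n)} {S : Finset (Fin n)}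
    (h : ∀ x ∈ S, ∀ y ∉ S, π x < π y) (x : Fin n) : (π x : ℕ) < #S ↔ x ∈ S := by
  rw [val_apply_eq_card]
  refine ⟨fun hx => by_contra fun hxS => ?_, fun hx => card_lt_card ?_⟩
  · exact hx.not_ge (card_le_card fun y hy => mem_filter.2 ⟨mem_univ y, h y hy x hxS⟩)
  · refine (ssubset_iff_of_subset fun y hy => by_contra fun hyS => ?_).2 ⟨x, hx, by simp⟩
    exact lt_asymm (mem_filter.1 hy).2 (h x hx y hyS)

noncomputable def restrictBlock (π : Perm (Fin n)) (s t m : ℕ) (hs : s + m ≤ n)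
    (h : ∀ i : Fin n, s ≤ i → (i : ℕ) < s + m → t ≤ π i ∧ (π i : ℕ) < t + m) :
    Perm (Fin m) :=
  ofVal (fun i => π ⟨s + i, by omega⟩ - t)
    (fun i => by have := h ⟨s + i, by omega⟩ (by simp) (by simp); omega)
    (fun i j hij => by
      dsimp only at hij
      have hi := h ⟨s + i, by omega⟩ (by simp) (by simp)
      have hj := h ⟨s + j, by omega⟩ (by simp) (by simp)
      have := π.injective (Fin.ext (by omega : (π ⟨s + i, _⟩ : ℕ) = π ⟨s + j, _⟩))
      simp only [Fin.mk.injEq, Nat.add_left_cancel_iff] at this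
      exact Fin.ext this)

lemma val_restrictBlock (π : Perm (Fin n)) (s t m : ℕ) (hs : s + m ≤ n)
    (h : ∀ i : Fin n, s ≤ i → (i : ℕ) < s + m → t ≤ π i ∧ (π i : ℕ) < t + m) (i : Fin m) :
    (π.restrictBlock s t m hs h i : ℕ) = π ⟨s + i, by omega⟩ - t := rfl

end Values

section MaxPos

variable {m : ℕ}

def maxPos (π : Perm (Fin (m + 1))) : Fin (m + 1) := π.symm (Fin.last m)

lemma apply_eq_last_iff (π : Perm (Fin (m + 1))) (i : Fin (m + 1)) :
    π i = Fin.last m ↔ i = π.maxPos :=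
  π.eq_symm_apply.symm

lemma val_apply_lt_of_ne_maxPos {π : Perm (Fin (m + 1))} {i : Fin (m + 1)}
    (h : i ≠ π.maxPos) : (π i : ℕ) < m :=
  Fin.val_lt_last ((π.apply_eq_last_iff i).not.2 h)

end MaxPos

variable {a b : ℕ}

section SkewWithMax

def skewWithMaxFun (α : Perm (Fin a)) (β : Perm (Fin b)) (i : Fin (a + b + 1)) : ℕ :=
  if h : (i : ℕ) < a then b + α ⟨i, h⟩
  else if _ : (i : ℕ) = a then a + b
  else β ⟨i - (a + 1), by omega⟩

variable (α : Perm (Fin a)) (β : Perm (Fin b))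

@[simp]
lemma skewWithMaxFun_left (x : Fin a) : skewWithMaxFun α β ⟨x, by omega⟩ = b + α x := by
  simp [skewWithMaxFun]

@[simp]
lemma skewWithMaxFun_max : skewWithMaxFun α β ⟨a, by omega⟩ = a + b := by
  simp [skewWithMaxFun]

@[simp]
lemma skewWithMaxFun_right (y : Fin b) : skewWithMaxFun α β ⟨a + 1 + y, by omega⟩ = β y := by
  simp [skewWithMaxFun, show ¬ a + 1 + (y : ℕ) < a by omega, show a + 1 + (y : ℕ) ≠ a by omega]

lemma skewWithMaxFun_injective : Injective (skewWithMaxFun α β) := by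
  intro i j h
  obtain ⟨x, rfl⟩ | rfl | ⟨y, rfl⟩ := Fin.eq_left_or_eq_or_eq_right i <;>
  obtain ⟨x', rfl⟩ | rfl | ⟨y', rfl⟩ := Fin.eq_left_or_eq_or_eq_right j <;>
  simp only [skewWithMaxFun_left, skewWithMaxFun_max, skewWithMaxFun_right] at h <;>
  first
  | omega
  | rfl
  | simp [α.injective (Fin.ext (by omega : (α x : ℕ) = α x'))]
  | simp [β.injective (Fin.ext h)]

noncomputable def skewWithMax : Perm (Fin (a + b + 1)) :=
  ofVal (skewWithMaxFun α β)
    (fun i => by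
      obtain ⟨x, rfl⟩ | rfl | ⟨y, rfl⟩ := Fin.eq_left_or_eq_or_eq_right i <;> simp <;> omega)
    (skewWithMaxFun_injective α β)

lemma val_skewWithMax (i : Fin (a + b + 1)) : (skewWithMax α β i : ℕ) = skewWithMaxFun α β i :=
  rfl

lemma maxPos_skewWithMax : ((skewWithMax α β).maxPos : ℕ) = a := by
  rw [← ((skewWithMax α β).apply_eq_last_iff ⟨a, by omega⟩).1 (Fin.ext (by simp [val_skewWithMax]))]

end SkewWithMax

lemma skewWithMax_injective2 : Injective2 (skewWithMax : Perm (Fin a) → Perm (Fin b) → _) := by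
  intro α α' β β' h
  have hv : ∀ i, skewWithMaxFun α β i = skewWithMaxFun α' β' i := fun i => by
    rw [← val_skewWithMax, ← val_skewWithMax, h]
  refine ⟨Equiv.ext fun x => Fin.ext ?_, Equiv.ext fun y => Fin.ext ?_⟩
  · simpa using hv ⟨x, by omega⟩
  · simpa using hv ⟨a + 1 + y, by omega⟩

section SkewWith132

/-- The entries at positions `a`, `a + 1`, `a + 2` are the `1`, `3`, `2` of a 132. -/
def skewWith132Fun (α : Perm (Fin a)) (β : Perm (Fin b)) (i : Fin (a + b + 3)) : ℕ :=
  if h : (i : ℕ) < a then b + 2 + α ⟨i, h⟩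
  else if _ : (i : ℕ) = a then b
  else if _ : (i : ℕ) = a + 1 then a + b + 2
  else if _ : (i : ℕ) = a + 2 then b + 1
  else β ⟨i - (a + 3), by omega⟩

variable (α : Perm (Fin a)) (β : Perm (Fin b))

@[simp]
lemma skewWith132Fun_left (x : Fin a) : skewWith132Fun α β ⟨x, by omega⟩ = b + 2 + α x := by
  simp [skewWith132Fun]

@[simp]
lemma skewWith132Fun_one : skewWith132Fun α β ⟨a, by omega⟩ = b := by
  simp [skewWith132Fun]

@[simp]
lemma skewWith132Fun_three : skewWith132Fun α β ⟨a + 1, by omega⟩ = a + b + 2 := by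
  simp [skewWith132Fun]

@[simp]
lemma skewWith132Fun_two : skewWith132Fun α β ⟨a + 2, by omega⟩ = b + 1 := by
  simp [skewWith132Fun]

@[simp]
lemma skewWith132Fun_right (y : Fin b) :
    skewWith132Fun α β ⟨a + 3 + y, by omega⟩ = β y := by
  simp [skewWith132Fun, show ¬ a + 3 + (y : ℕ) < a by omega, show a + 3 + (y : ℕ) ≠ a by omega,
    show a + 3 + (y : ℕ) ≠ a + 1 by omega, show a + 3 + (y : ℕ) ≠ a + 2 by omega]

lemma skewWith132Fun_injective : Injective (skewWith132Fun α β) := by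
  intro i j h
  obtain ⟨x, rfl⟩ | rfl | rfl | rfl | ⟨y, rfl⟩ := Fin.eq_left_or_eq_or_eq_or_eq_or_eq_right i <;>
  obtain ⟨x', rfl⟩ | rfl | rfl | rfl | ⟨y', rfl⟩ := Fin.eq_left_or_eq_or_eq_or_eq_or_eq_right j <;>
  simp only [skewWith132Fun_left, skewWith132Fun_one, skewWith132Fun_two, skewWith132Fun_three,
    skewWith132Fun_right] at h <;>
  first
  | omega
  | rfl
  | simp [α.injective (Fin.ext (by omega : (α x : ℕ) = α x'))]
  | simp [β.injective (Fin.ext h)]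

noncomputable def skewWith132 : Perm (Fin (a + b + 3)) :=
  ofVal (skewWith132Fun α β)
    (fun i => by
      obtain ⟨x, rfl⟩ | rfl | rfl | rfl | ⟨y, rfl⟩ :=
        Fin.eq_left_or_eq_or_eq_or_eq_or_eq_right i <;> simp <;> omega)
    (skewWith132Fun_injective α β)

lemma val_skewWith132 (i : Fin (a + b + 3)) : (skewWith132 α β i : ℕ) = skewWith132Fun α β i :=
  rfl

lemma maxPos_skewWith132 : ((skewWith132 α β).maxPos : ℕ) = a + 1 := by
  rw [← ((skewWith132 α β).apply_eq_last_iff ⟨a + 1, by omega⟩).1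
    (Fin.ext (by simp [val_skewWith132]))]

lemma occ132At_skewWith132 : Occ132At (skewWith132 α β) a :=
  ⟨by omega, by simp [Fin.lt_def, val_skewWith132], by simp [Fin.lt_def, val_skewWith132]⟩

end SkewWith132

lemma skewWith132_injective2 : Injective2 (skewWith132 : Perm (Fin a) → Perm (Fin b) → _) := by
  intro α α' β β' h
  have hv : ∀ i, skewWith132Fun α β i = skewWith132Fun α' β' i := fun i => by
    rw [← val_skewWith132, ← val_skewWith132, h]
  refine ⟨Equiv.ext fun x => Fin.ext ?_, Equiv.ext fun y => Fin.ext ?_⟩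
  · simpa using hv ⟨x, by omega⟩
  · simpa using hv ⟨a + 3 + y, by omega⟩

end Equiv.Perm

open Perm

variable {a b : ℕ}

lemma AvoidsNonconsec132.restrictBlock {n : ℕ} {π : Perm (Fin n)} (hπ : AvoidsNonconsec132 π)
    (s t m : ℕ) (hs : s + m ≤ n)
    (h : ∀ i : Fin n, s ≤ i → (i : ℕ) < s + m → t ≤ π i ∧ (π i : ℕ) < t + m) :
    AvoidsNonconsec132 (π.restrictBlock s t m hs h) := by
  intro i j k hij hjk hik hkj
  simp only [Fin.lt_def, val_restrictBlock] at hij hjk hik hkj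
  have hi := h ⟨s + i, by omega⟩ (by simp) (by simp)
  have hj := h ⟨s + j, by omega⟩ (by simp) (by simp)
  have hk := h ⟨s + k, by omega⟩ (by simp) (by simp)
  have := hπ ⟨s + i, by omega⟩ ⟨s + j, by omega⟩ ⟨s + k, by omega⟩ (by simp [Fin.lt_def, hij])
    (by simp [Fin.lt_def, hjk]) (Fin.lt_def.2 (by omega)) (Fin.lt_def.2 (by omega))
  simp only at this
  omega

lemma avoidsNonconsec132_skewWithMax {α : Perm (Fin a)} {β : Perm (Fin b)}
    (hα : AvoidsNonconsec132 α) (hβ : AvoidsNonconsec132 β) :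
    AvoidsNonconsec132 (skewWithMax α β) := by
  -- every later block lies below every earlier one, except for the maximum, which cannot be
  -- the `2` of a 132; so an occurrence of 132 stays inside `α` or inside `β`
  intro i j k hij hjk hik hkj
  simp only [Fin.lt_def, val_skewWithMax] at hik hkj
  obtain ⟨x, rfl⟩ | rfl | ⟨y, rfl⟩ := Fin.eq_left_or_eq_or_eq_right i <;>
  obtain ⟨x', rfl⟩ | rfl | ⟨y', rfl⟩ := Fin.eq_left_or_eq_or_eq_right j <;>
  obtain ⟨x'', rfl⟩ | rfl | ⟨y'', rfl⟩ := Fin.eq_left_or_eq_or_eq_right k <;>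
  simp only [Fin.mk_lt_mk, skewWithMaxFun_left, skewWithMaxFun_max,
    skewWithMaxFun_right] at hij hjk hik hkj ⊢ <;>
  first
  | omega
  | exact hα x x' x'' hij hjk (Fin.lt_def.2 (by omega)) (Fin.lt_def.2 (by omega))
  | have := hβ y y' y'' (Fin.lt_def.2 (by omega)) (Fin.lt_def.2 (by omega)) hik hkj; omega

lemma avoidsNonconsec132_skewWith132 {α : Perm (Fin a)} {β : Perm (Fin b)}
    (hα : AvoidsNonconsec132 α) (hβ : AvoidsNonconsec132 β) :
    AvoidsNonconsec132 (skewWith132 α β) := by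
  intro i j k hij hjk hik hkj
  simp only [Fin.lt_def, val_skewWith132] at hik hkj
  obtain ⟨x, rfl⟩ | rfl | rfl | rfl | ⟨y, rfl⟩ := Fin.eq_left_or_eq_or_eq_or_eq_or_eq_right i <;>
  obtain ⟨x', rfl⟩ | rfl | rfl | rfl | ⟨y', rfl⟩ := Fin.eq_left_or_eq_or_eq_or_eq_or_eq_right j <;>
  obtain ⟨x'', rfl⟩ | rfl | rfl | rfl | ⟨y'', rfl⟩ :=
    Fin.eq_left_or_eq_or_eq_or_eq_or_eq_right k <;>
  simp only [Fin.mk_lt_mk, skewWith132Fun_left, skewWith132Fun_one, skewWith132Fun_two,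
    skewWith132Fun_three, skewWith132Fun_right] at hij hjk hik hkj ⊢ <;>
  first
  | omega
  | trivial
  | exact hα x x' x'' hij hjk (Fin.lt_def.2 (by omega)) (Fin.lt_def.2 (by omega))
  | have := hβ y y' y'' (Fin.lt_def.2 (by omega)) (Fin.lt_def.2 (by omega)) hik hkj; omega

lemma AvoidsNonconsec132.consecutive_of_lt_maxPos_lt {m : ℕ} {π : Perm (Fin (m + 1))}
    (hπ : AvoidsNonconsec132 π) {i k : Fin (m + 1)} (hi : i < π.maxPos) (hk : π.maxPos < k)
    (h : π i < π k) : (π.maxPos : ℕ) = i + 1 ∧ (k : ℕ) = i + 2 :=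
  hπ i _ k hi hk h (by
    rw [(π.apply_eq_last_iff _).2 rfl]
    exact Fin.lt_last_iff_ne_last.2 ((π.apply_eq_last_iff k).not.2 hk.ne'))

def MaxInOcc132 {m : ℕ} (π : Perm (Fin (m + 1))) : Prop :=
  ∃ p, Occ132At π p ∧ (π.maxPos : ℕ) = p + 1

lemma MaxInOcc132.of_apply_lt {m : ℕ} {π : Perm (Fin (m + 1))} {i k : Fin (m + 1)}
    (hpos : (π.maxPos : ℕ) = i + 1) (hk : (k : ℕ) = i + 2) (h : π i < π k) : MaxInOcc132 π := by
  have hmax : (⟨i + 1, by omega⟩ : Fin (m + 1)) = π.maxPos := Fin.ext hpos.symm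
  have hk' : (⟨i + 2, by omega⟩ : Fin (m + 1)) = k := Fin.ext hk.symm
  refine ⟨i, ⟨by omega, by simpa [hk'] using h, ?_⟩, hpos⟩
  rw [hk', (π.apply_eq_last_iff _).2 hmax]
  exact Fin.lt_last_iff_ne_last.2 ((π.apply_eq_last_iff k).not.2 (Fin.ne_of_val_ne (by omega)))

lemma not_maxInOcc132_skewWithMax (α : Perm (Fin a)) (β : Perm (Fin b)) :
    ¬ MaxInOcc132 (skewWithMax α β) := by
  rintro ⟨p, ⟨hp, hlt, -⟩, hpos⟩
  rw [maxPos_skewWithMax] at hpos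
  rw [Fin.lt_def, val_skewWithMax, val_skewWithMax] at hlt
  simp [skewWithMaxFun, show p < a by omega, show ¬ p + 2 < a by omega,
    show p + 2 ≠ a by omega] at hlt
  omega

lemma AvoidsNonconsec132.val_apply_of_not_maxInOcc132 {π : Perm (Fin (a + b + 1))}
    (hπ : AvoidsNonconsec132 π) (hmax : (π.maxPos : ℕ) = a) (hocc : ¬ MaxInOcc132 π) :
    (∀ i : Fin (a + b + 1), (i : ℕ) < a → b ≤ π i ∧ (π i : ℕ) < b + a) ∧
      ∀ k : Fin (a + b + 1), a < (k : ℕ) → (π k : ℕ) < b := by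
  have cross : ∀ i k : Fin (a + b + 1), (i : ℕ) < a → a < (k : ℕ) → π k < π i := by
    intro i k hi hk
    by_contra h
    have hik := lt_of_le_of_ne (not_lt.1 h) (π.injective.ne (Fin.ne_of_val_ne (by omega)))
    obtain ⟨h1, h2⟩ := hπ.consecutive_of_lt_maxPos_lt (Fin.lt_def.2 (by omega))
      (Fin.lt_def.2 (by omega)) hik
    exact hocc (.of_apply_lt h1 h2 hik)
  have sep : ∀ x ∈ Ioi (⟨a, by omega⟩ : Fin (a + b + 1)), ∀ y ∉ Ioi ⟨a, by omega⟩, π x < π y := by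
    intro x hx y hy
    simp only [mem_Ioi, Fin.lt_def, not_lt] at hx hy
    obtain hya | hya := Nat.lt_or_eq_of_le hy
    · exact cross y x hya hx
    · rw [(π.apply_eq_last_iff y).2 (Fin.ext (hya.trans hmax.symm))]
      exact Fin.lt_last_iff_ne_last.2 ((π.apply_eq_last_iff x).not.2 (Fin.ne_of_val_ne (by omega)))
  have hcard : #(Ioi (⟨a, by omega⟩ : Fin (a + b + 1))) = b := by simp [Fin.card_Ioi]
  refine ⟨fun i hi => ⟨?_, ?_⟩, fun k hk => ?_⟩
  · simpa [hcard, Fin.lt_def, hi.not_gt] using (val_apply_lt_card_iff sep i).not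
  · have := val_apply_lt_of_ne_maxPos (π := π) (i := i) (Fin.ne_of_val_ne (by omega))
    omega
  · simpa [hcard, Fin.lt_def, hk] using (val_apply_lt_card_iff sep k)

lemma AvoidsNonconsec132.exists_skewWithMax_eq {π : Perm (Fin (a + b + 1))}
    (hπ : AvoidsNonconsec132 π) (hmax : (π.maxPos : ℕ) = a) (hocc : ¬ MaxInOcc132 π) :
    ∃ α β, AvoidsNonconsec132 α ∧ AvoidsNonconsec132 β ∧ skewWithMax α β = π := by
  obtain ⟨hleft, hright⟩ := hπ.val_apply_of_not_maxInOcc132 hmax hocc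
  refine ⟨π.restrictBlock 0 b a (by omega) fun i _ hi => hleft i (by omega),
    π.restrictBlock (a + 1) 0 b (by omega)
      fun i hi _ => ⟨Nat.zero_le _, by simpa using hright i (by omega)⟩,
    hπ.restrictBlock _ _ _ _ _, hπ.restrictBlock _ _ _ _ _, Equiv.ext fun i => Fin.ext ?_⟩
  rw [val_skewWithMax]
  obtain ⟨x, rfl⟩ | rfl | ⟨y, rfl⟩ := Fin.eq_left_or_eq_or_eq_right i
  · have := hleft ⟨x, by omega⟩ x.isLt
    simp only [skewWithMaxFun_left, val_restrictBlock, zero_add]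
    omega
  · simp [(π.apply_eq_last_iff ⟨a, by omega⟩).2 (Fin.ext hmax.symm)]
  · simp [val_restrictBlock]

lemma AvoidsNonconsec132.apply_lt_apply_of_occ132At {π : Perm (Fin (a + b + 3))}
    (hπ : AvoidsNonconsec132 π) (hmax : (π.maxPos : ℕ) = a + 1) (hocc : Occ132At π a) :
    π ⟨a, by omega⟩ < π ⟨a + 2, by omega⟩ ∧
      (∀ k : Fin (a + b + 3), a + 2 < (k : ℕ) → π k < π ⟨a, by omega⟩) ∧
      ∀ y : Fin (a + b + 3), (y : ℕ) ≤ a + 2 → (y : ℕ) ≠ a → π ⟨a + 2, by omega⟩ ≤ π y := by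
  obtain ⟨_, hQ, -⟩ := hocc
  have cross : ∀ i k : Fin (a + b + 3), (i : ℕ) < a + 1 → a + 1 < (k : ℕ) →
      ¬ ((i : ℕ) = a ∧ (k : ℕ) = a + 2) → π k < π i := by
    intro i k hi hk hik
    by_contra h
    have := hπ.consecutive_of_lt_maxPos_lt (Fin.lt_def.2 (by omega)) (Fin.lt_def.2 (by omega))
      (lt_of_le_of_ne (not_lt.1 h) (π.injective.ne (Fin.ne_of_val_ne (by omega))))
    omega
  refine ⟨hQ, fun k hk => cross _ k (by simp) (by omega) (by simp; omega), fun y hy hya => ?_⟩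
  obtain hy' | hy' | hy' : (y : ℕ) < a ∨ (y : ℕ) = a + 1 ∨ (y : ℕ) = a + 2 := by omega
  · exact (cross y _ (by omega) (by simp) (by omega)).le
  · rw [(π.apply_eq_last_iff y).2 (Fin.ext (hy'.trans hmax.symm))]
    exact Fin.le_last _
  · rw [show y = ⟨a + 2, by omega⟩ from Fin.ext hy']

lemma AvoidsNonconsec132.val_apply_of_occ132At {π : Perm (Fin (a + b + 3))}
    (hπ : AvoidsNonconsec132 π) (hmax : (π.maxPos : ℕ) = a + 1) (hocc : Occ132At π a) :
    (∀ i : Fin (a + b + 3), (i : ℕ) < a → b + 2 ≤ π i ∧ (π i : ℕ) < b + 2 + a) ∧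
      (π ⟨a, by omega⟩ : ℕ) = b ∧ (π ⟨a + 2, by omega⟩ : ℕ) = b + 1 ∧
      ∀ k : Fin (a + b + 3), a + 2 < (k : ℕ) → (π k : ℕ) < b := by
  obtain ⟨hQ, hR, hC⟩ := hπ.apply_lt_apply_of_occ132At hmax hocc
  set A : Fin (a + b + 3) := ⟨a, by omega⟩
  set C : Fin (a + b + 3) := ⟨a + 2, by omega⟩
  have mem_R : ∀ y, y ∈ Ioi C ↔ a + 2 < (y : ℕ) := fun y => by simp [C, Fin.lt_def]
  have hA : ∀ y : Fin (a + b + 3), (y : ℕ) ≤ a + 2 → π A ≤ π y := fun y hy => by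
    by_cases hya : (y : ℕ) = a
    · rw [show y = A from Fin.ext hya]
    · exact hQ.le.trans (hC y hy hya)
  -- the values increase along the blocks `(a + 2, n)`, `{a}`, `{a + 2}`, `[0, a)`, `{a + 1}`
  have sep1 : ∀ x ∈ Ioi C, ∀ y ∉ Ioi C, π x < π y := fun x hx y hy =>
    (hR x ((mem_R x).1 hx)).trans_le (hA y (by simpa [mem_R] using hy))
  have sep2 : ∀ x ∈ insert A (Ioi C), ∀ y ∉ insert A (Ioi C), π x < π y := by
    intro x hx y hy
    rw [mem_insert, not_or, mem_R, not_lt] at hy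
    rcases mem_insert.1 hx with rfl | hx
    · exact hQ.trans_le (hC y hy.2 fun h => hy.1 (Fin.ext h))
    · exact sep1 x hx y (by simpa [mem_R] using hy.2)
  have sep3 : ∀ x ∈ insert C (insert A (Ioi C)), ∀ y ∉ insert C (insert A (Ioi C)),
      π x < π y := by
    intro x hx y hy
    rw [mem_insert, not_or] at hy
    rcases mem_insert.1 hx with rfl | hx
    · rw [mem_insert, not_or, mem_R, not_lt] at hy
      exact lt_of_le_of_ne (hC y hy.2.2 fun h => hy.2.1 (Fin.ext h))
        (π.injective.ne (Ne.symm hy.1))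
    · exact sep2 x hx y hy.2
  have hAR : A ∉ Ioi C := by simp [mem_R, A]
  have hCR : C ∉ insert A (Ioi C) := by simp [mem_R, A, C, Fin.ext_iff]
  have h1 := val_apply_lt_card_iff sep1
  have h2 := val_apply_lt_card_iff sep2
  have h3 := val_apply_lt_card_iff sep3
  have hR : #(Ioi C) = b := by simp [C, Fin.card_Ioi]
  rw [card_insert_of_notMem hCR, card_insert_of_notMem hAR, hR] at h3
  rw [card_insert_of_notMem hAR, hR] at h2
  rw [hR] at h1
  refine ⟨fun i hi => ⟨?_, ?_⟩, ?_, ?_, fun k hk => (h1 k).2 ((mem_R k).2 hk)⟩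
  · have := (h3 i).not.2 (by simp [mem_R, A, C, Fin.ext_iff]; omega)
    omega
  · have := val_apply_lt_of_ne_maxPos (π := π) (i := i) (Fin.ne_of_val_ne (by omega))
    omega
  · have := (h1 A).not.2 hAR
    have := (h2 A).2 (mem_insert_self _ _)
    omega
  · have := (h2 C).not.2 hCR
    have := (h3 C).2 (mem_insert_self _ _)
    omega

lemma AvoidsNonconsec132.exists_skewWith132_eq {π : Perm (Fin (a + b + 3))}
    (hπ : AvoidsNonconsec132 π) (hmax : (π.maxPos : ℕ) = a + 1) (hocc : Occ132At π a) :
    ∃ α β, AvoidsNonconsec132 α ∧ AvoidsNonconsec132 β ∧ skewWith132 α β = π := by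
  obtain ⟨hleft, hA, hC, hright⟩ := hπ.val_apply_of_occ132At hmax hocc
  refine ⟨π.restrictBlock 0 (b + 2) a (by omega) fun i _ hi => hleft i (by omega),
    π.restrictBlock (a + 3) 0 b (by omega)
      fun i hi _ => ⟨Nat.zero_le _, by simpa using hright i (by omega)⟩,
    hπ.restrictBlock _ _ _ _ _, hπ.restrictBlock _ _ _ _ _, Equiv.ext fun i => Fin.ext ?_⟩
  rw [val_skewWith132]
  obtain ⟨x, rfl⟩ | rfl | rfl | rfl | ⟨y, rfl⟩ := Fin.eq_left_or_eq_or_eq_or_eq_or_eq_right i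
  · have := hleft ⟨x, by omega⟩ x.isLt
    simp only [skewWith132Fun_left, val_restrictBlock, zero_add]
    omega
  · simp [hA]
  · simp [(π.apply_eq_last_iff ⟨a + 1, by omega⟩).2 (Fin.ext hmax.symm)]
  · simp [hC]
  · simp [val_restrictBlock]

lemma card_eq_e_mul_e_of_injective2 {N : ℕ} {S : Perm (Fin N) → Prop}
    {g : Perm (Fin a) → Perm (Fin b) → Perm (Fin N)} (hg : Injective2 g)
    (hS : ∀ π, S π ↔ ∃ α β, AvoidsNonconsec132 α ∧ AvoidsNonconsec132 β ∧ g α β = π) :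
    Nat.card {π // S π} = e a * e b := by
  rw [e, e, ← Nat.card_prod]
  refine (Nat.card_eq_of_bijective (fun p => ⟨g p.1 p.2, (hS _).2 ⟨_, _, p.1.2, p.2.2, rfl⟩⟩)
    ⟨?_, ?_⟩).symm
  · rintro ⟨⟨α, hα⟩, β, hβ⟩ ⟨⟨α', hα'⟩, β', hβ'⟩ h
    obtain ⟨rfl, rfl⟩ := hg (congrArg Subtype.val h)
    rfl
  · rintro ⟨π, hπ⟩
    obtain ⟨α, β, hα, hβ, rfl⟩ := (hS π).1 hπ
    exact ⟨(⟨α, hα⟩, ⟨β, hβ⟩), rfl⟩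

lemma card_avoidsNonconsec132_maxPos_eq_not_maxInOcc132 (a b : ℕ) :
    Nat.card {π : Perm (Fin (a + b + 1)) //
      AvoidsNonconsec132 π ∧ (π.maxPos : ℕ) = a ∧ ¬ MaxInOcc132 π} = e a * e b :=
  card_eq_e_mul_e_of_injective2 skewWithMax_injective2 fun _ =>
    ⟨fun ⟨hπ, hmax, hocc⟩ => hπ.exists_skewWithMax_eq hmax hocc, by
      rintro ⟨α, β, hα, hβ, rfl⟩
      exact ⟨avoidsNonconsec132_skewWithMax hα hβ, maxPos_skewWithMax α β,
        not_maxInOcc132_skewWithMax α β⟩⟩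

lemma card_avoidsNonconsec132_maxPos_eq_occ132At (a b : ℕ) :
    Nat.card {π : Perm (Fin (a + b + 3)) //
      AvoidsNonconsec132 π ∧ (π.maxPos : ℕ) = a + 1 ∧ Occ132At π a} = e a * e b :=
  card_eq_e_mul_e_of_injective2 skewWith132_injective2 fun _ =>
    ⟨fun ⟨hπ, hmax, hocc⟩ => hπ.exists_skewWith132_eq hmax hocc, by
      rintro ⟨α, β, hα, hβ, rfl⟩
      exact ⟨avoidsNonconsec132_skewWith132 hα hβ, maxPos_skewWith132 α β,
        occ132At_skewWith132 α β⟩⟩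

lemma card_avoidsNonconsec132_not_maxInOcc132 (m : ℕ) :
    Nat.card {π : Perm (Fin (m + 1)) // AvoidsNonconsec132 π ∧ ¬ MaxInOcc132 π} =
      ∑ p ∈ range (m + 1), e p * e (m - p) := by
  rw [Nat.card_subtype_eq_sum_card_fiberwise (f := fun π => (π.maxPos : ℕ))
    fun π _ => mem_range.2 π.maxPos.isLt]
  refine sum_congr rfl fun p hp => ?_
  obtain ⟨b, rfl⟩ : ∃ b, m = p + b := ⟨m - p, by simp at hp; omega⟩
  rw [Nat.add_sub_cancel_left, ← card_avoidsNonconsec132_maxPos_eq_not_maxInOcc132]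
  exact Nat.card_congr (Equiv.subtypeEquivRight fun π => by tauto)

lemma card_avoidsNonconsec132_maxInOcc132 (m : ℕ) :
    Nat.card {π : Perm (Fin (m + 1)) // AvoidsNonconsec132 π ∧ MaxInOcc132 π} =
      ∑ p ∈ range (m - 1), e p * e (m - 2 - p) := by
  rw [Nat.card_subtype_eq_sum_card_fiberwise (f := fun π => (π.maxPos : ℕ) - 1)
    (t := range (m - 1))]
  swap
  · rintro π ⟨_, q, ⟨hq, _⟩, hpos⟩
    simp only [mem_range]
    omega
  refine sum_congr rfl fun p hp => ?_
  obtain ⟨b, rfl⟩ : ∃ b, m = p + b + 2 := ⟨m - p - 2, by simp at hp; omega⟩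
  rw [show p + b + 2 - 2 - p = b by omega, ← card_avoidsNonconsec132_maxPos_eq_occ132At]
  refine Nat.card_congr (Equiv.subtypeEquivRight fun π => ⟨?_, ?_⟩)
  · rintro ⟨⟨hπ, q, hq, hpos⟩, hp⟩
    obtain rfl : q = p := by omega
    exact ⟨hπ, hpos, hq⟩
  · rintro ⟨hπ, hpos, hq⟩
    exact ⟨⟨hπ, p, hq, hpos⟩, by omega⟩

lemma e_zero : e 0 = 1 := by
  simp [e, AvoidsNonconsec132]

lemma e_succ (m : ℕ) :
    e (m + 1) =
      ∑ p ∈ range (m + 1), e p * e (m - p) + ∑ p ∈ range (m - 1), e p * e (m - 2 - p) := by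
  rw [← card_avoidsNonconsec132_not_maxInOcc132, ← card_avoidsNonconsec132_maxInOcc132]
  exact (Nat.card_subtype_eq_card_and_add_card_and_not _ _).trans (add_comm _ _)

open PowerSeries in
lemma PowerSeries.X_add_X_pow_three_mul_sq_sub_add_one_eq_zero {R : Type*} [CommRing R]
    {f : ℕ → R} (h0 : f 0 = 1)
    (hsucc : ∀ m, f (m + 1) =
      ∑ p ∈ range (m + 1), f p * f (m - p) + ∑ p ∈ range (m - 1), f p * f (m - 2 - p)) :
    (X + X ^ 3) * mk f ^ 2 - mk f + 1 = 0 := by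
  have hsq : ∀ k, coeff k (mk f ^ 2) = ∑ p ∈ range (k + 1), f p * f (k - p) := fun k => by
    simp [sq, coeff_mul, Nat.sum_antidiagonal_eq_sum_range_succ_mk]
  ext (_ | _ | _ | m) <;> simp [h0, hsucc, hsq, coeff_X_pow_mul', add_mul]

open PowerSeries in
/-- The generating function `F(x) = ∑ e_n xⁿ` satisfies `(x + x³) F² - F + 1 = 0`. -/
theorem genfun_132_quadratic :
    (X + X ^ 3) * (PowerSeries.mk fun n => (e n : ℚ)) ^ 2
      - (PowerSeries.mk fun n => (e n : ℚ)) + 1 = 0 :=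
  PowerSeries.X_add_X_pow_three_mul_sq_sub_add_one_eq_zero (by simp [e_zero])
    fun m => by simp [e_succ]
end
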